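/- arXiv:1608.02637 — 10 statements merged into one kernel-verified Lean document; each statement's English description precedes it below -/
import Mathlib

section
/- Let f : ℝ → ℝ be integrable on (0,∞) and satisfy ∬_{(0,∞)×(0,∞)} min(x,y) |f(x)| |f(y)| dx dy < ∞. Then ∬_{(0,∞)×(0,∞)} f(x) f(y) min(x,y) dx dy = ∫_0^∞ (∫_z^∞ f(x) dx)² dz. -/
/-!
Write `min x y = ∫_0^∞ 1_{z < x} 1_{z < y} dz`. Then `f x * g y * min x y` is the `z`-integral of
`F(x, y, z) = 1_{z < x} f x * 1_{z < y} g y`, whose absolute integrability over `(0,∞)³` is, by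
Tonelli, exactly the finiteness hypothesis. Fubini lets us integrate over `(x, y)` first, and for
fixed `z` that integral splits as `(∫_z^∞ f) (∫_z^∞ g)`.
-/

open MeasureTheory Set

lemma indicator_Ioi_mul_indicator_Ioi (f g : ℝ → ℝ) (x y z : ℝ) :
    (Ioi z).indicator f x * (Ioi z).indicator g y
      = (Iio (min x y)).indicator (fun _ => f x * g y) z := by
  by_cases hx : z < x <;> by_cases hy : z < y <;> simp [hx, hy]

lemma measurable_indicator_Ioi_snd {f : ℝ → ℝ} (hf : Measurable f) :
    Measurable fun p : ℝ × ℝ => (Ioi p.2).indicator f p.1 := by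
  simp only [indicator_apply, mem_Ioi]
  exact Measurable.ite (measurableSet_lt measurable_snd measurable_fst) (hf.comp measurable_fst)
    measurable_const

lemma setIntegral_Ioi_zero_indicator_Ioi_mul_indicator_Ioi {x y : ℝ} (hx : 0 ≤ x) (hy : 0 ≤ y)
    (f g : ℝ → ℝ) :
    ∫ z in Ioi 0, (Ioi z).indicator f x * (Ioi z).indicator g y = f x * g y * min x y := by
  simp only [indicator_Ioi_mul_indicator_Ioi]
  rw [setIntegral_indicator measurableSet_Iio, Ioi_inter_Iio, setIntegral_const,
    Real.volume_real_Ioo_of_le (le_min hx hy), sub_zero, smul_eq_mul, mul_comm]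

lemma setLIntegral_Ioi_zero_enorm_indicator_Ioi_mul_indicator_Ioi {x y : ℝ} (hx : 0 ≤ x)
    (hy : 0 ≤ y) (f g : ℝ → ℝ) :
    ∫⁻ z in Ioi 0, ‖(Ioi z).indicator f x * (Ioi z).indicator g y‖ₑ
      = ENNReal.ofReal (min x y * |f x| * |g y|) := by
  simp only [indicator_Ioi_mul_indicator_Ioi, enorm_indicator_eq_indicator_enorm]
  rw [lintegral_indicator measurableSet_Iio, Measure.restrict_restrict measurableSet_Iio,
    Iio_inter_Ioi, setLIntegral_const, Real.volume_Ioo, sub_zero, mul_assoc,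
    ENNReal.ofReal_mul (le_min hx hy), Real.enorm_eq_ofReal_abs, abs_mul, mul_comm]

lemma setIntegral_Ioi_indicator_Ioi {a z : ℝ} (h : a ≤ z) (f : ℝ → ℝ) :
    ∫ x in Ioi a, (Ioi z).indicator f x = ∫ x in Ioi z, f x := by
  rw [setIntegral_indicator measurableSet_Ioi, inter_eq_right.mpr (Ioi_subset_Ioi h)]

lemma ae_restrict_prod_restrict_mem {α β : Type*} [MeasurableSpace α] [MeasurableSpace β]
    {μ : Measure α} {ν : Measure β} [SFinite μ] [SFinite ν] {s : Set α} {t : Set β}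
    (hs : MeasurableSet s) (ht : MeasurableSet t) :
    ∀ᵐ p ∂((μ.restrict s).prod (ν.restrict t)), p ∈ s ×ˢ t := by
  rw [Measure.prod_restrict]
  exact ae_restrict_mem (hs.prod ht)

section
variable {f g : ℝ → ℝ}

lemma integrable_indicator_Ioi_mul_indicator_Ioi (hf : Measurable f) (hg : Measurable g)
    (hfin : (∫⁻ x in Ioi (0:ℝ), ∫⁻ y in Ioi (0:ℝ), ENNReal.ofReal (min x y * |f x| * |g y|)) < ⊤) :
    Integrable (fun q : (ℝ × ℝ) × ℝ => (Ioi q.2).indicator f q.1.1 * (Ioi q.2).indicator g q.1.2)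
      (((volume.restrict (Ioi 0)).prod (volume.restrict (Ioi 0))).prod
        (volume.restrict (Ioi 0))) := by
  have hmeas : Measurable fun q : (ℝ × ℝ) × ℝ =>
      (Ioi q.2).indicator f q.1.1 * (Ioi q.2).indicator g q.1.2 :=
    ((measurable_indicator_Ioi_snd hf).comp (measurable_fst.fst.prodMk measurable_snd)).mul
      ((measurable_indicator_Ioi_snd hg).comp (measurable_fst.snd.prodMk measurable_snd))
  refine ⟨hmeas.aestronglyMeasurable, ?_⟩
  rw [HasFiniteIntegral, lintegral_prod _ hmeas.enorm.aemeasurable]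
  calc _ = ∫⁻ p, ENNReal.ofReal (min p.1 p.2 * |f p.1| * |g p.2|)
          ∂((volume.restrict (Ioi 0)).prod (volume.restrict (Ioi 0))) := by
        refine lintegral_congr_ae ?_
        filter_upwards [ae_restrict_prod_restrict_mem measurableSet_Ioi measurableSet_Ioi]
          with p hp
        exact setLIntegral_Ioi_zero_enorm_indicator_Ioi_mul_indicator_Ioi hp.1.le hp.2.le f g
    _ = _ := lintegral_prod _ (by fun_prop)
    _ < ⊤ := hfin

theorem setIntegral_mul_mul_min_eq_setIntegral_tail_mul_tail (hf : Measurable f)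
    (hg : Measurable g)
    (hfin : (∫⁻ x in Ioi (0:ℝ), ∫⁻ y in Ioi (0:ℝ), ENNReal.ofReal (min x y * |f x| * |g y|)) < ⊤) :
    (∫ x in Ioi (0:ℝ), ∫ y in Ioi (0:ℝ), f x * g y * min x y) =
      ∫ z in Ioi (0:ℝ), (∫ x in Ioi z, f x) * ∫ y in Ioi z, g y := by
  set μ := volume.restrict (Ioi (0:ℝ))
  set G : ℝ × ℝ → ℝ → ℝ := fun p z => (Ioi z).indicator f p.1 * (Ioi z).indicator g p.2
  have hG : Integrable (Function.uncurry G) ((μ.prod μ).prod μ) :=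
    integrable_indicator_Ioi_mul_indicator_Ioi hf hg hfin
  have hGz : (fun p => ∫ z, G p z ∂μ) =ᵐ[μ.prod μ] fun p => f p.1 * g p.2 * min p.1 p.2 := by
    filter_upwards [ae_restrict_prod_restrict_mem measurableSet_Ioi measurableSet_Ioi] with p hp
    exact setIntegral_Ioi_zero_indicator_Ioi_mul_indicator_Ioi hp.1.le hp.2.le f g
  calc (∫ x in Ioi (0:ℝ), ∫ y in Ioi (0:ℝ), f x * g y * min x y)
      = ∫ p, f p.1 * g p.2 * min p.1 p.2 ∂(μ.prod μ) :=
        (integral_prod _ (hG.integral_prod_left.congr hGz)).symm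
    _ = ∫ p, ∫ z, G p z ∂μ ∂(μ.prod μ) := integral_congr_ae hGz.symm
    _ = ∫ z, ∫ p, G p z ∂(μ.prod μ) ∂μ := integral_integral_swap hG
    _ = ∫ z, (∫ x, (Ioi z).indicator f x ∂μ) * ∫ y, (Ioi z).indicator g y ∂μ ∂μ := by
        simp only [G, integral_prod_mul]
    _ = _ := by
        refine integral_congr_ae ?_
        filter_upwards [ae_restrict_mem measurableSet_Ioi] with z hz
        rw [setIntegral_Ioi_indicator_Ioi hz.le, setIntegral_Ioi_indicator_Ioi hz.le]

end

theorem stmt_2_general (f : ℝ → ℝ) (hf : Measurable f)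
    (hfin : (∫⁻ x in Set.Ioi (0:ℝ), ∫⁻ y in Set.Ioi (0:ℝ),
        ENNReal.ofReal (min x y * |f x| * |f y|)) < ⊤) :
    (∫ x in Set.Ioi (0:ℝ), ∫ y in Set.Ioi (0:ℝ), f x * f y * min x y) =
      ∫ z in Set.Ioi (0:ℝ), (∫ x in Set.Ioi z, f x) ^ 2 := by
  simpa only [sq] using setIntegral_mul_mul_min_eq_setIntegral_tail_mul_tail hf hf hfin

/-- If `f` is integrable on `(0,∞)` and
`∬_{(0,∞)²} min(x,y) |f(x)| |f(y)| dx dy < ∞`, then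
`∬_{(0,∞)²} f(x) f(y) min(x,y) dx dy = ∫_0^∞ (∫_z^∞ f)² dz`. -/
theorem stmt_2 (f : ℝ → ℝ) (hf : Measurable f)
    (hint : IntegrableOn f (Set.Ioi (0:ℝ)))
    (hfin : (∫⁻ x in Set.Ioi (0:ℝ), ∫⁻ y in Set.Ioi (0:ℝ),
        ENNReal.ofReal (min x y * |f x| * |f y|)) < ⊤) :
    (∫ x in Set.Ioi (0:ℝ), ∫ y in Set.Ioi (0:ℝ), f x * f y * min x y) =
      ∫ z in Set.Ioi (0:ℝ), (∫ x in Set.Ioi z, f x) ^ 2 :=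
  stmt_2_general f hf hfin
end

section
/- Let f : ℝ → ℝ be integrable with ∬_{xy>0} min(|x|,|y|) |f(x)| |f(y)| dx dy < ∞. Then C[f] = ∬_{xy>0} min(|x|,|y|) f(x) f(y) dx dy ≥ 0, and C[f] = 0 if and only if f = 0 almost everywhere. In other words, the quadratic form C is positive-definite on this class of functions. -/
/-!
Since `min (|x|, |y|) = ∫₀^∞ 1[t < min (|x|, |y|)] dt`, exchanging the order of integration and
observing that for `t ≥ 0` the set `{xy > 0, min (|x|, |y|) > t}` is the disjoint union of the
squares `(t, ∞)²` and `(-∞, -t)²` gives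
`C[f] = ∫₀^∞ (A(t)² + B(t)²) dt`, where `A(t) = ∫_{x > t} f` and `B(t) = ∫_{x < -t} f`.
Hence `C[f] ≥ 0`. If `C[f] = 0`, the integrand is continuous on `[0, ∞)`, so `A` and `B` vanish
there; then every primitive `∫₀ˣ f` vanishes and the Lebesgue differentiation theorem gives
`f = 0` almost everywhere.
-/

open MeasureTheory Set

section LayerCake

variable {E : Type*} [NormedAddCommGroup E]

theorem integrableOn_Ioi_zero_indicator_Iio (c : E) (a : ℝ) :
    IntegrableOn (fun t => (Iio a).indicator (fun _ => c) t) (Ioi 0) := by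
  rw [IntegrableOn, integrable_indicator_iff measurableSet_Iio]
  refine integrableOn_const ?_
  rw [Measure.restrict_apply measurableSet_Iio, Iio_inter_Ioi]
  exact measure_Ioo_lt_top.ne

theorem integral_Ioi_zero_indicator_Iio [NormedSpace ℝ E] [CompleteSpace E] (c : E) {a : ℝ}
    (ha : 0 ≤ a) : ∫ t in Ioi 0, (Iio a).indicator (fun _ => c) t = a • c := by
  rw [integral_indicator_const c measurableSet_Iio, measureReal_restrict_apply measurableSet_Iio,
    Iio_inter_Ioi, Real.volume_real_Ioo_of_le ha, sub_zero]

variable [NormedSpace ℝ E] {X : Type*} [MeasurableSpace X] {ν : Measure X} {m : X → ℝ} {g : X → E}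

theorem integral_indicator_Iio_eq_setIntegral_lt (t : ℝ) (hm : Measurable m) :
    ∫ x, (Iio (m x)).indicator (fun _ => g x) t ∂ν = ∫ x in {x | t < m x}, g x ∂ν := by
  rw [← integral_indicator (measurableSet_lt measurable_const hm)]
  rfl

variable [SFinite ν]

theorem integrable_uncurry_indicator_Iio (hm : Measurable m) (hm0 : 0 ≤ m)
    (hg : AEStronglyMeasurable g ν) (hmg : Integrable (fun x => m x • g x) ν) :
    Integrable (Function.uncurry fun t x => (Iio (m x)).indicator (fun _ => g x) t)
      ((volume.restrict (Ioi 0)).prod ν) := by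
  have hmeas : AEStronglyMeasurable
      (Function.uncurry fun t x => (Iio (m x)).indicator (fun _ => g x) t)
      ((volume.restrict (Ioi 0)).prod ν) :=
    hg.comp_snd.indicator (measurableSet_lt measurable_fst (hm.comp measurable_snd))
  refine (integrable_prod_iff' hmeas).2
    ⟨ae_of_all _ fun x => integrableOn_Ioi_zero_indicator_Iio (g x) (m x), ?_⟩
  refine hmg.norm.congr (ae_of_all _ fun x => ?_)
  simp only [Function.uncurry_apply_pair, norm_indicator_eq_indicator_norm]
  rw [integral_Ioi_zero_indicator_Iio _ (hm0 x), norm_smul, Real.norm_of_nonneg (hm0 x),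
    smul_eq_mul]

theorem integrableOn_Ioi_setIntegral_lt (hm : Measurable m) (hm0 : 0 ≤ m)
    (hg : AEStronglyMeasurable g ν) (hmg : Integrable (fun x => m x • g x) ν) :
    IntegrableOn (fun t => ∫ x in {x | t < m x}, g x ∂ν) (Ioi 0) := by
  have := (integrable_uncurry_indicator_Iio hm hm0 hg hmg).integral_prod_left
  simp only [Function.uncurry_apply_pair, integral_indicator_Iio_eq_setIntegral_lt _ hm] at this
  exact this

variable [CompleteSpace E]

theorem integral_smul_eq_integral_Ioi_setIntegral_lt (hm : Measurable m) (hm0 : 0 ≤ m)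
    (hg : AEStronglyMeasurable g ν) (hmg : Integrable (fun x => m x • g x) ν) :
    ∫ x, m x • g x ∂ν = ∫ t in Ioi 0, ∫ x in {x | t < m x}, g x ∂ν := by
  have hswap := integral_integral_swap (integrable_uncurry_indicator_Iio hm hm0 hg hmg)
  simp only [integral_Ioi_zero_indicator_Iio _ (hm0 _),
    integral_indicator_Iio_eq_setIntegral_lt _ hm] at hswap
  exact hswap.symm

end LayerCake

theorem setOf_mul_pos_inter_setOf_lt_min_abs {t : ℝ} (ht : 0 ≤ t) :
    {p : ℝ × ℝ | 0 < p.1 * p.2} ∩ {p | t < min |p.1| |p.2|} =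
      Ioi t ×ˢ Ioi t ∪ Iio (-t) ×ˢ Iio (-t) := by
  ext ⟨x, y⟩
  simp only [mem_inter_iff, mem_ofPred_eq, lt_min_iff, mem_union, mem_prod, mem_Ioi, mem_Iio]
  constructor
  · rintro ⟨hxy, hx, hy⟩
    rcases mul_pos_iff.1 hxy with ⟨hx0, hy0⟩ | ⟨hx0, hy0⟩
    · rw [abs_of_pos hx0, abs_of_pos hy0] at *; left; exact ⟨hx, hy⟩
    · rw [abs_of_neg hx0, abs_of_neg hy0] at *; right; constructor <;> linarith
  · rintro (⟨hx, hy⟩ | ⟨hx, hy⟩)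
    · refine ⟨mul_pos (by linarith) (by linarith), ?_, ?_⟩ <;>
        rw [abs_of_pos (by linarith)] <;> assumption
    · refine ⟨mul_pos_of_neg_of_neg (by linarith) (by linarith), ?_, ?_⟩ <;>
        rw [abs_of_neg (by linarith)] <;> linarith

section Primitive

variable {E : Type*} [NormedAddCommGroup E] [NormedSpace ℝ E] [CompleteSpace E] {f : ℝ → E}

theorem ae_eq_zero_of_forall_intervalIntegral_eq_zero (hf : LocallyIntegrable f)
    (h : ∀ x, ∫ t in (0 : ℝ)..x, f t = 0) : f =ᵐ[volume] 0 := by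
  filter_upwards [LocallyIntegrable.ae_hasDerivAt_integral hf] with x hx
  have hx0 := hx 0
  simp only [h] at hx0
  exact hx0.unique (hasDerivAt_const x 0)

theorem ae_eq_zero_of_integral_Ioi_eq_zero_of_integral_Iio_eq_zero (hf : Integrable f)
    (hIoi : ∀ t, 0 ≤ t → ∫ x in Ioi t, f x = 0) (hIio : ∀ t, t ≤ 0 → ∫ x in Iio t, f x = 0) :
    f =ᵐ[volume] 0 := by
  refine ae_eq_zero_of_forall_intervalIntegral_eq_zero hf.locallyIntegrable fun x => ?_
  rcases le_total 0 x with hx | hx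
  · rw [← intervalIntegral.integral_Ioi_sub_Ioi hf.integrableOn hx, hIoi 0 le_rfl, hIoi x hx,
      sub_zero]
  · rw [← intervalIntegral.integral_Iio_sub_Iio' hf.integrableOn hf.integrableOn, hIio 0 le_rfl,
      hIio x hx, sub_zero]

end Primitive

theorem eqOn_zero_of_setIntegral_Ioi_eq_zero {φ : ℝ → ℝ} {a : ℝ} (hφ : ContinuousOn φ (Ici a))
    (hφ0 : ∀ t ∈ Ioi a, 0 ≤ φ t) (hint : IntegrableOn φ (Ioi a)) (h : ∫ t in Ioi a, φ t = 0) :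
    EqOn φ 0 (Ici a) := by
  have hae : φ =ᵐ[volume.restrict (Ici a)] 0 := by
    rw [Measure.restrict_congr_set Ioi_ae_eq_Ici.symm]
    exact (integral_eq_zero_iff_of_nonneg_ae (ae_restrict_of_forall_mem measurableSet_Ioi hφ0)
      hint).1 h
  refine Measure.eqOn_of_ae_eq hae hφ continuousOn_const ?_
  rw [interior_Ici, closure_Ioi]

section Correlation

variable {f : ℝ → ℝ}

theorem continuous_min_abs : Continuous fun p : ℝ × ℝ => min |p.1| |p.2| := by fun_prop

theorem MeasureTheory.Integrable.mul_prod_self (hf : Integrable f) :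
    Integrable (fun p : ℝ × ℝ => f p.1 * f p.2) :=
  hf.mul_prod hf

theorem setIntegral_lt_min_abs_restrict_mul_pos (hf : Integrable f) {t : ℝ} (ht : 0 ≤ t) :
    ∫ p in {p : ℝ × ℝ | t < min |p.1| |p.2|}, f p.1 * f p.2
        ∂volume.restrict {p : ℝ × ℝ | 0 < p.1 * p.2} =
      (∫ x in Ioi t, f x) ^ 2 + (∫ x in Iio (-t), f x) ^ 2 := by
  have hdisj : Disjoint (Ioi t ×ˢ Ioi t) (Iio (-t) ×ˢ Iio (-t)) :=
    (Ioi_disjoint_Iio_of_le (by linarith)).set_prod_left _ _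
  rw [Measure.restrict_restrict (measurableSet_lt measurable_const (by fun_prop)), inter_comm,
    setOf_mul_pos_inter_setOf_lt_min_abs ht,
    setIntegral_union hdisj (measurableSet_Iio.prod measurableSet_Iio)
      hf.mul_prod_self.integrableOn hf.mul_prod_self.integrableOn,
    Measure.volume_eq_prod, setIntegral_prod_mul, setIntegral_prod_mul, sq, sq]

theorem continuousOn_Ici_sq_add_sq (hf : Integrable f) :
    ContinuousOn (fun t => (∫ x in Ioi t, f x) ^ 2 + (∫ x in Iio (-t), f x) ^ 2) (Ici 0) := by
  have hIio : ContinuousOn (fun t => ∫ x in Iio (-t), f x) (Ici 0) :=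
    (hf.integrableOn (s := Iio 0)).continuousOn_Iic_primitive_Iio.comp continuous_neg.continuousOn
      fun t (ht : 0 ≤ t) => show -t ≤ 0 by linarith
  exact (((hf.integrableOn (s := Ioi 0)).continuousOn_Ici_primitive_Ioi).pow 2).add (hIio.pow 2)

variable (hf : Integrable f)
    (hfin : (∫⁻ p in {p : ℝ × ℝ | 0 < p.1 * p.2},
        ENNReal.ofReal (min (|p.1|) (|p.2|) * |f p.1| * |f p.2|)) < ⊤)
include hf hfin

theorem integrableOn_min_abs_smul_mul :
    IntegrableOn (fun p : ℝ × ℝ => min |p.1| |p.2| • (f p.1 * f p.2))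
      {p : ℝ × ℝ | 0 < p.1 * p.2} := by
  refine ⟨continuous_min_abs.aestronglyMeasurable.smul
    hf.mul_prod_self.aestronglyMeasurable.restrict, ?_⟩
  rw [hasFiniteIntegral_iff_norm]
  convert hfin using 3 with p
  rw [norm_smul, norm_mul, Real.norm_of_nonneg (le_min (abs_nonneg _) (abs_nonneg _)),
    Real.norm_eq_abs, Real.norm_eq_abs, mul_assoc]

theorem integral_mul_pos_min_abs_mul_eq :
    ∫ p in {p : ℝ × ℝ | 0 < p.1 * p.2}, min (|p.1|) (|p.2|) * f p.1 * f p.2 =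
      ∫ t in Ioi 0, ((∫ x in Ioi t, f x) ^ 2 + (∫ x in Iio (-t), f x) ^ 2) := by
  simp_rw [mul_assoc, ← smul_eq_mul (min _ _)]
  rw [integral_smul_eq_integral_Ioi_setIntegral_lt continuous_min_abs.measurable
    (fun _ => le_min (abs_nonneg _) (abs_nonneg _))
    hf.mul_prod_self.aestronglyMeasurable.restrict (integrableOn_min_abs_smul_mul hf hfin)]
  exact setIntegral_congr_fun measurableSet_Ioi fun t ht =>
    setIntegral_lt_min_abs_restrict_mul_pos hf ht.le

theorem integrableOn_Ioi_sq_add_sq :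
    IntegrableOn (fun t => (∫ x in Ioi t, f x) ^ 2 + (∫ x in Iio (-t), f x) ^ 2) (Ioi 0) :=
  (integrableOn_Ioi_setIntegral_lt continuous_min_abs.measurable
    (fun _ => le_min (abs_nonneg _) (abs_nonneg _))
    hf.mul_prod_self.aestronglyMeasurable.restrict
    (integrableOn_min_abs_smul_mul hf hfin)).congr_fun
    (fun _ ht => setIntegral_lt_min_abs_restrict_mul_pos hf ht.le) measurableSet_Ioi

end Correlation

theorem stmt_3_general (f : ℝ → ℝ) (hint : Integrable f)
    (hfin : (∫⁻ p in {p : ℝ × ℝ | 0 < p.1 * p.2},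
        ENNReal.ofReal (min (|p.1|) (|p.2|) * |f p.1| * |f p.2|)) < ⊤) :
    0 ≤ (∫ p in {p : ℝ × ℝ | 0 < p.1 * p.2}, min (|p.1|) (|p.2|) * f p.1 * f p.2) ∧
      ((∫ p in {p : ℝ × ℝ | 0 < p.1 * p.2}, min (|p.1|) (|p.2|) * f p.1 * f p.2) = 0 ↔
        f =ᵐ[volume] 0) := by
  rw [integral_mul_pos_min_abs_mul_eq hint hfin]
  refine ⟨setIntegral_nonneg measurableSet_Ioi fun t _ => by positivity, fun h0 => ?_, fun h0 => ?_⟩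
  · have hzero := eqOn_zero_of_setIntegral_Ioi_eq_zero (continuousOn_Ici_sq_add_sq hint)
      (fun t _ => by positivity) (integrableOn_Ioi_sq_add_sq hint hfin) h0
    have hsq (t : ℝ) (ht : 0 ≤ t) : (∫ x in Ioi t, f x) = 0 ∧ (∫ x in Iio (-t), f x) = 0 := by
      obtain ⟨hA, hB⟩ :=
        (add_eq_zero_iff_of_nonneg (sq_nonneg _) (sq_nonneg _)).1 (hzero (mem_Ici.2 ht))
      exact ⟨pow_eq_zero_iff two_ne_zero |>.1 hA, pow_eq_zero_iff two_ne_zero |>.1 hB⟩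
    refine ae_eq_zero_of_integral_Ioi_eq_zero_of_integral_Iio_eq_zero hint
      (fun t ht => (hsq t ht).1) fun t ht => ?_
    simpa using (hsq (-t) (neg_nonneg.2 ht)).2
  · have hvanish : ∀ s : Set ℝ, ∫ x in s, f x = 0 := fun s =>
      integral_eq_zero_of_ae (ae_restrict_of_ae h0)
    simp [hvanish]

/-- The quadratic form `C[f] = ∬_{xy>0} min(|x|,|y|) f(x) f(y) dx dy`
is positive-definite: for integrable `f` with the double integral absolutely
convergent, `C[f] ≥ 0` and `C[f] = 0` iff `f = 0` almost everywhere. -/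
theorem stmt_3 (f : ℝ → ℝ) (hf : Measurable f) (hint : Integrable f)
    (hfin : (∫⁻ p in {p : ℝ × ℝ | 0 < p.1 * p.2},
        ENNReal.ofReal (min (|p.1|) (|p.2|) * |f p.1| * |f p.2|)) < ⊤) :
    0 ≤ (∫ p in {p : ℝ × ℝ | 0 < p.1 * p.2}, min (|p.1|) (|p.2|) * f p.1 * f p.2) ∧
      ((∫ p in {p : ℝ × ℝ | 0 < p.1 * p.2}, min (|p.1|) (|p.2|) * f p.1 * f p.2) = 0 ↔
        f =ᵐ[volume] 0) :=
  stmt_3_general f hint hfin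
end

section
/- Let z < 1. Then for every M ∈ ℝ there exists a differentiable function u : ℝ → ℝ with u and its derivative u' square-integrable, ∫_ℝ u(x)² dx = 1, ∫_ℝ |x| u(x)² dx < ∞, and E_z[u] < M. Hence the energy E_z is not bounded below on this class and admits no global minimiser when z < 1. -/
/-!
Put mass `1 - ε` in a Gaussian bump at the origin and mass `ε` in a copy translated by `R`.
Convexity of the Fisher information `∫ (√ρ)'²` keeps the kinetic term bounded independently of
`R`; the attraction `z ∫ |x| ρ` grows at most like `max z 0 · ε R`; and the cross terms of
`ρ ⊗ ρ` make the repulsion `½ ∬ |x - y| ρ ρ` at least `(1 - ε) ε R`, because `|x - y| ≥ ±(x - y)`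
and the two bumps have centres of mass `0` and `R`. For `ε = (1 - max z 0) / 2` the energy is
`≤ C - (1 - max z 0)² R / 4`, which tends to `-∞` with `R`.
-/

open MeasureTheory Real

noncomputable def pointChargeEnergy (z : ℝ) (u : ℝ → ℝ) : ℝ :=
  (∫ x, deriv u x ^ 2) + (1/2) * ∫ x, ∫ y, (z * (|x| + |y|) - |x - y|) * u x ^ 2 * u y ^ 2

lemma add_sq_div_add_le {p q s t : ℝ} (hs : 0 < s) (ht : 0 < t) :
    (p + q) ^ 2 / (s + t) ≤ p ^ 2 / s + q ^ 2 / t := by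
  simpa [Fin.sum_univ_two] using
    Finset.univ.sq_sum_div_le_sum_sq_div ![p, q] (g := ![s, t])
      (by simp [Fin.forall_fin_two, hs, ht])

lemma sq_deriv_sqrt {f : ℝ → ℝ} {x : ℝ} (hf : DifferentiableAt ℝ f x) (hx : 0 < f x) :
    deriv (fun y => √(f y)) x ^ 2 = deriv f x ^ 2 / (4 * f x) := by
  rw [(hf.hasDerivAt.sqrt hx.ne').deriv, div_pow, mul_pow, sq_sqrt hx.le]
  norm_num

lemma sq_deriv_sqrt_add_le {f g : ℝ → ℝ} {α β x : ℝ} (hα : 0 < α) (hβ : 0 < β)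
    (hf : DifferentiableAt ℝ f x) (hg : DifferentiableAt ℝ g x) (hf0 : 0 < f x) (hg0 : 0 < g x) :
    deriv (fun y => √(α * f y + β * g y)) x ^ 2
      ≤ α * deriv (fun y => √(f y)) x ^ 2 + β * deriv (fun y => √(g y)) x ^ 2 := by
  have hd : HasDerivAt (fun y => α * f y + β * g y) (α * deriv f x + β * deriv g x) x :=
    (hf.hasDerivAt.const_mul α).add (hg.hasDerivAt.const_mul β)
  rw [sq_deriv_sqrt hd.differentiableAt (by positivity), hd.deriv, sq_deriv_sqrt hf hf0,
    sq_deriv_sqrt hg hg0, mul_add]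
  calc (α * deriv f x + β * deriv g x) ^ 2 / (4 * (α * f x) + 4 * (β * g x))
      ≤ (α * deriv f x) ^ 2 / (4 * (α * f x)) + (β * deriv g x) ^ 2 / (4 * (β * g x)) :=
        add_sq_div_add_le (by positivity) (by positivity)
    _ = _ := by field_simp

lemma integrable_abs_sub_mul_mul {ρ : ℝ → ℝ} (hρ : Integrable ρ)
    (hρ1 : Integrable fun x => |x| * ρ x) :
    Integrable (fun p : ℝ × ℝ => |p.1 - p.2| * ρ p.1 * ρ p.2) (volume.prod volume) := by
  refine ((hρ1.mul_prod hρ).norm.add (hρ.mul_prod hρ1).norm).mono' ?_ (ae_of_all _ fun p => ?_)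
  · exact ((continuous_abs.comp (continuous_fst.sub continuous_snd)).aestronglyMeasurable.mul
      hρ.1.comp_fst).mul hρ.1.comp_snd
  · simp only [Pi.add_apply, norm_mul, norm_eq_abs, abs_abs]
    have := abs_sub p.1 p.2
    have := mul_nonneg (abs_nonneg (ρ p.1)) (abs_nonneg (ρ p.2))
    nlinarith

lemma integral_integral_pointCharge {ρ : ℝ → ℝ} (hρ : Integrable ρ)
    (hρ1 : Integrable fun x => |x| * ρ x) (z : ℝ) :
    ∫ x, ∫ y, (z * (|x| + |y|) - |x - y|) * ρ x * ρ y
      = 2 * z * (∫ x, |x| * ρ x) * (∫ x, ρ x)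
        - ∫ p, |p.1 - p.2| * ρ p.1 * ρ p.2 ∂(volume.prod volume) := by
  have hA : Integrable (fun p : ℝ × ℝ => |p.1| * ρ p.1 * ρ p.2 + ρ p.1 * (|p.2| * ρ p.2))
      (volume.prod volume) := (hρ1.mul_prod hρ).add (hρ.mul_prod hρ1)
  have hB := integrable_abs_sub_mul_mul hρ hρ1
  have hsplit : (fun p : ℝ × ℝ => (z * (|p.1| + |p.2|) - |p.1 - p.2|) * ρ p.1 * ρ p.2)
      = fun p => z * (|p.1| * ρ p.1 * ρ p.2 + ρ p.1 * (|p.2| * ρ p.2))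
        - |p.1 - p.2| * ρ p.1 * ρ p.2 := by
    ext p; ring
  have hF : Integrable (fun p : ℝ × ℝ => (z * (|p.1| + |p.2|) - |p.1 - p.2|) * ρ p.1 * ρ p.2)
      (volume.prod volume) := by
    rw [hsplit]; exact (hA.const_mul z).sub hB
  rw [integral_integral (f := fun x y => (z * (|x| + |y|) - |x - y|) * ρ x * ρ y) hF, hsplit,
    integral_sub (hA.const_mul z) hB, integral_const_mul,
    integral_add (hρ1.mul_prod hρ) (hρ.mul_prod hρ1), integral_prod_mul (fun x => |x| * ρ x) ρ,
    integral_prod_mul ρ (fun x => |x| * ρ x)]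
  ring

section Moments
variable {f : ℝ → ℝ}

lemma integrable_abs_mul_of_nonneg (hf0 : 0 ≤ f) (hxf : Integrable fun x => x * f x) :
    Integrable fun x => |x| * f x :=
  hxf.abs.congr (ae_of_all _ fun x => show |x * f x| = |x| * f x by
    rw [abs_mul, abs_of_nonneg (hf0 x)])

lemma integrable_mul_comp_sub (hf : Integrable f) (hxf : Integrable fun x => x * f x) (R : ℝ) :
    Integrable fun x => x * f (x - R) := by
  refine ((hxf.add (hf.const_mul R)).comp_sub_right R).congr (ae_of_all _ fun x => ?_)
  simp only [Pi.add_apply]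
  ring

lemma integral_mul_comp_sub (hf : Integrable f) (hxf : Integrable fun x => x * f x) (R : ℝ) :
    ∫ x, x * f (x - R) = (∫ x, x * f x) + R * ∫ x, f x := by
  rw [← integral_const_mul, ← integral_add hxf (hf.const_mul R),
    ← integral_sub_right_eq_self (fun x => x * f x + R * f x) R]
  congr 1 with x
  ring

lemma integral_abs_mul_comp_sub_le (hf0 : 0 ≤ f) (hf : Integrable f)
    (hxf : Integrable fun x => |x| * f x) (R : ℝ) :
    ∫ x, |x| * f (x - R) ≤ (∫ x, |x| * f x) + |R| * ∫ x, f x := by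
  rw [← integral_const_mul, ← integral_add hxf (hf.const_mul _),
    ← integral_sub_right_eq_self (fun x => |x| * f x + |R| * f x) R]
  refine integral_mono_of_nonneg (ae_of_all _ fun x => mul_nonneg (abs_nonneg x) (hf0 _))
    ((hxf.add (hf.const_mul _)).comp_sub_right R) (ae_of_all _ fun x => ?_)
  have h := abs_sub_le x R 0
  simp only [sub_zero] at h
  simpa only [add_mul] using mul_le_mul_of_nonneg_right h (hf0 (x - R))

end Moments

section Repulsion
variable {f g : ℝ → ℝ}

lemma integrable_sub_mul_mul (hf : Integrable f) (hg : Integrable g)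
    (hxf : Integrable fun x => x * f x) (hxg : Integrable fun x => x * g x) :
    Integrable (fun p : ℝ × ℝ => (p.2 - p.1) * f p.1 * g p.2) (volume.prod volume) := by
  refine ((hf.mul_prod hxg).sub (hxf.mul_prod hg)).congr (ae_of_all _ fun p => ?_)
  simp only [Pi.sub_apply]
  ring

lemma integral_sub_mul_mul (hf : Integrable f) (hg : Integrable g)
    (hxf : Integrable fun x => x * f x) (hxg : Integrable fun x => x * g x) :
    ∫ p, (p.2 - p.1) * f p.1 * g p.2 ∂(volume.prod volume)
      = (∫ x, f x) * (∫ x, x * g x) - (∫ x, x * f x) * ∫ x, g x := by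
  rw [← integral_prod_mul f (fun x => x * g x), ← integral_prod_mul (fun x => x * f x) g,
    ← integral_sub (hf.mul_prod hxg) (hxf.mul_prod hg)]
  congr 1 with p
  ring

lemma integral_abs_sub_mul_mul_add_ge (hf0 : 0 ≤ f) (hg0 : 0 ≤ g) {α β : ℝ}
    (hα : 0 ≤ α) (hβ : 0 ≤ β) (hf : Integrable f) (hg : Integrable g)
    (hxf : Integrable fun x => x * f x) (hxg : Integrable fun x => x * g x) :
    2 * α * β * ((∫ x, f x) * (∫ x, x * g x) - (∫ x, x * f x) * ∫ x, g x)
      ≤ ∫ p, |p.1 - p.2| * (α * f p.1 + β * g p.1) * (α * f p.2 + β * g p.2)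
          ∂(volume.prod volume) := by
  have hfg := integrable_sub_mul_mul hf hg hxf hxg
  have hgf := integrable_sub_mul_mul hg hf hxg hxf
  have hcross : Integrable (fun p : ℝ × ℝ =>
      α * β * ((p.2 - p.1) * f p.1 * g p.2 - (p.2 - p.1) * g p.1 * f p.2)) (volume.prod volume) :=
    (hfg.sub hgf).const_mul _
  have hρ : Integrable fun x => α * f x + β * g x := (hf.const_mul α).add (hg.const_mul β)
  have hρ1 : Integrable fun x => |x| * (α * f x + β * g x) := by
    refine (((integrable_abs_mul_of_nonneg hf0 hxf).const_mul α).add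
      ((integrable_abs_mul_of_nonneg hg0 hxg).const_mul β)).congr (ae_of_all _ fun x => ?_)
    simp only [Pi.add_apply]
    ring
  calc 2 * α * β * ((∫ x, f x) * (∫ x, x * g x) - (∫ x, x * f x) * ∫ x, g x)
      = ∫ p, α * β * ((p.2 - p.1) * f p.1 * g p.2 - (p.2 - p.1) * g p.1 * f p.2)
          ∂(volume.prod volume) := by
        rw [integral_const_mul, integral_sub hfg hgf, integral_sub_mul_mul hf hg hxf hxg,
          integral_sub_mul_mul hg hf hxg hxf]
        ring
    _ ≤ _ := by
        refine integral_mono hcross (integrable_abs_sub_mul_mul hρ hρ1) fun p => ?_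
        have hfg0 := mul_nonneg (mul_nonneg hα hβ) (mul_nonneg (hf0 p.1) (hg0 p.2))
        have hgf0 := mul_nonneg (mul_nonneg hα hβ) (mul_nonneg (hg0 p.1) (hf0 p.2))
        have hff0 := mul_nonneg (abs_nonneg (p.1 - p.2)) (mul_nonneg (hf0 p.1) (hf0 p.2))
        have hgg0 := mul_nonneg (abs_nonneg (p.1 - p.2)) (mul_nonneg (hg0 p.1) (hg0 p.2))
        nlinarith [mul_le_mul_of_nonneg_right (neg_abs_le (p.1 - p.2)) hfg0,
          mul_le_mul_of_nonneg_right (le_abs_self (p.1 - p.2)) hgf0,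
          mul_nonneg (mul_self_nonneg α) hff0, mul_nonneg (mul_self_nonneg β) hgg0]

end Repulsion

noncomputable def gaussianBump (x : ℝ) : ℝ := exp (-x ^ 2) / √π

lemma gaussianBump_pos (x : ℝ) : 0 < gaussianBump x := by
  unfold gaussianBump; have := pi_pos; positivity

@[fun_prop]
lemma differentiable_gaussianBump : Differentiable ℝ gaussianBump := by
  unfold gaussianBump; fun_prop

lemma integrable_gaussianBump : Integrable gaussianBump := by
  have := (integrable_exp_neg_mul_sq one_pos).div_const √π
  simp only [neg_mul, one_mul] at this
  exact this

lemma integral_gaussianBump : ∫ x, gaussianBump x = 1 := by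
  have h : ∫ x : ℝ, exp (-x ^ 2) = √π := by simpa using integral_gaussian 1
  simp only [gaussianBump, integral_div, h]
  exact div_self (sqrt_pos.2 pi_pos).ne'

lemma integrable_mul_gaussianBump : Integrable fun x => x * gaussianBump x := by
  simpa [gaussianBump, mul_div_assoc] using (integrable_mul_exp_neg_mul_sq one_pos).div_const √π

lemma integral_mul_gaussianBump : ∫ x, x * gaussianBump x = 0 := by
  have h := integral_neg_eq_self (fun x => x * gaussianBump x) volume
  simp only [gaussianBump, neg_sq, neg_mul, integral_neg] at h
  simp only [gaussianBump]
  linarith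

lemma integrable_abs_mul_gaussianBump : Integrable fun x => |x| * gaussianBump x :=
  integrable_abs_mul_of_nonneg (fun x => (gaussianBump_pos x).le) integrable_mul_gaussianBump

lemma integrable_sq_mul_gaussianBump : Integrable fun x => x ^ 2 * gaussianBump x := by
  simpa [gaussianBump, mul_div_assoc, rpow_two] using
    (integrable_rpow_mul_exp_neg_mul_sq one_pos (s := 2) (by norm_num)).div_const √π

lemma hasDerivAt_gaussianBump (x : ℝ) :
    HasDerivAt gaussianBump (-2 * x * gaussianBump x) x := by
  have h : HasDerivAt (fun y : ℝ => -y ^ 2) (-(2 * x)) x := by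
    simpa using (hasDerivAt_pow 2 x).fun_neg
  have e : -2 * x * gaussianBump x = exp (-x ^ 2) * -(2 * x) / √π := by
    rw [gaussianBump]; ring
  rw [e]
  exact h.exp.div_const √π

lemma sq_deriv_sqrt_gaussianBump (x : ℝ) :
    deriv (fun y => √(gaussianBump y)) x ^ 2 = x ^ 2 * gaussianBump x := by
  have hd := hasDerivAt_gaussianBump x
  rw [sq_deriv_sqrt hd.differentiableAt (gaussianBump_pos x), hd.deriv]
  field_simp [(gaussianBump_pos x).ne']
  ring

section TwoBump
variable {ε : ℝ} (R : ℝ)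

noncomputable def twoBump (ε R x : ℝ) : ℝ := (1 - ε) * gaussianBump x + ε * gaussianBump (x - R)

lemma twoBump_pos (hε0 : 0 < ε) (hε1 : ε < 1) (x : ℝ) : 0 < twoBump ε R x := by
  have := gaussianBump_pos x
  have := gaussianBump_pos (x - R)
  unfold twoBump
  have : 0 < 1 - ε := by linarith
  positivity

lemma sq_sqrt_twoBump (hε0 : 0 < ε) (hε1 : ε < 1) (x : ℝ) :
    √(twoBump ε R x) ^ 2 = twoBump ε R x :=
  sq_sqrt (twoBump_pos R hε0 hε1 x).le

lemma integrable_twoBump : Integrable (twoBump ε R) :=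
  (integrable_gaussianBump.const_mul _).add ((integrable_gaussianBump.comp_sub_right R).const_mul _)

lemma integral_twoBump : ∫ x, twoBump ε R x = 1 := by
  simp only [twoBump]
  rw [integral_add (integrable_gaussianBump.const_mul _)
      ((integrable_gaussianBump.comp_sub_right R).const_mul _), integral_const_mul,
    integral_const_mul, integral_sub_right_eq_self gaussianBump R, integral_gaussianBump]
  ring

lemma integrable_abs_mul_twoBump : Integrable fun x => |x| * twoBump ε R x := by
  have hshift := integrable_abs_mul_of_nonneg (fun x => (gaussianBump_pos (x - R)).le)
    (integrable_mul_comp_sub integrable_gaussianBump integrable_mul_gaussianBump R)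
  refine ((integrable_abs_mul_gaussianBump.const_mul (1 - ε)).add (hshift.const_mul ε)).congr
    (ae_of_all _ fun x => ?_)
  simp only [Pi.add_apply, twoBump]
  ring

lemma integral_abs_mul_twoBump_le (hε0 : 0 ≤ ε) :
    ∫ x, |x| * twoBump ε R x ≤ (∫ x, |x| * gaussianBump x) + ε * |R| := by
  have hshift := integrable_abs_mul_of_nonneg (fun x => (gaussianBump_pos (x - R)).le)
    (integrable_mul_comp_sub integrable_gaussianBump integrable_mul_gaussianBump R)
  have hle := integral_abs_mul_comp_sub_le (fun x => (gaussianBump_pos x).le)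
    integrable_gaussianBump integrable_abs_mul_gaussianBump R
  rw [integral_gaussianBump] at hle
  have hsplit : (fun x => |x| * twoBump ε R x)
      = fun x => (1 - ε) * (|x| * gaussianBump x) + ε * (|x| * gaussianBump (x - R)) := by
    ext x; simp only [twoBump]; ring
  rw [hsplit, integral_add (integrable_abs_mul_gaussianBump.const_mul _) (hshift.const_mul _),
    integral_const_mul, integral_const_mul]
  nlinarith

lemma le_integral_abs_sub_mul_twoBump (hε0 : 0 ≤ ε) (hε1 : ε ≤ 1) :
    2 * (1 - ε) * ε * R
      ≤ ∫ p, |p.1 - p.2| * twoBump ε R p.1 * twoBump ε R p.2 ∂(volume.prod volume) := by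
  have h := integral_abs_sub_mul_mul_add_ge (fun x => (gaussianBump_pos x).le)
    (fun x => (gaussianBump_pos (x - R)).le) (sub_nonneg.2 hε1) hε0 integrable_gaussianBump
    (integrable_gaussianBump.comp_sub_right R) integrable_mul_gaussianBump
    (integrable_mul_comp_sub integrable_gaussianBump integrable_mul_gaussianBump R)
  rwa [integral_mul_comp_sub integrable_gaussianBump integrable_mul_gaussianBump R,
    integral_sub_right_eq_self gaussianBump R, integral_mul_gaussianBump, integral_gaussianBump,
    zero_mul, sub_zero, one_mul, zero_add, mul_one] at h

lemma sq_deriv_sqrt_twoBump_le (hε0 : 0 < ε) (hε1 : ε < 1) (x : ℝ) :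
    deriv (fun y => √(twoBump ε R y)) x ^ 2
      ≤ (1 - ε) * (x ^ 2 * gaussianBump x) + ε * ((x - R) ^ 2 * gaussianBump (x - R)) := by
  have h := sq_deriv_sqrt_add_le (f := gaussianBump) (g := fun y => gaussianBump (y - R)) (x := x)
    (sub_pos.2 hε1) hε0 (by fun_prop) (by fun_prop) (gaussianBump_pos x) (gaussianBump_pos _)
  rwa [deriv_comp_sub_const (f := fun y => √(gaussianBump y)), sq_deriv_sqrt_gaussianBump,
    sq_deriv_sqrt_gaussianBump] at h

lemma integrable_sq_deriv_sqrt_twoBump (hε0 : 0 < ε) (hε1 : ε < 1) :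
    Integrable fun x => deriv (fun y => √(twoBump ε R y)) x ^ 2 :=
  ((integrable_sq_mul_gaussianBump.const_mul _).add
    ((integrable_sq_mul_gaussianBump.comp_sub_right R).const_mul _)).mono'
    ((measurable_deriv _).pow_const 2).aestronglyMeasurable (ae_of_all _ fun x => by
      rw [norm_of_nonneg (sq_nonneg _)]
      exact sq_deriv_sqrt_twoBump_le R hε0 hε1 x)

lemma integral_sq_deriv_sqrt_twoBump_le (hε0 : 0 < ε) (hε1 : ε < 1) :
    ∫ x, deriv (fun y => √(twoBump ε R y)) x ^ 2 ≤ ∫ x, x ^ 2 * gaussianBump x := by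
  have hK := integrable_sq_mul_gaussianBump
  have hKR := hK.comp_sub_right R
  calc ∫ x, deriv (fun y => √(twoBump ε R y)) x ^ 2
      ≤ ∫ x, (1 - ε) * (x ^ 2 * gaussianBump x) + ε * ((x - R) ^ 2 * gaussianBump (x - R)) :=
        integral_mono (integrable_sq_deriv_sqrt_twoBump R hε0 hε1)
          ((hK.const_mul _).add (hKR.const_mul _)) (sq_deriv_sqrt_twoBump_le R hε0 hε1)
    _ = ∫ x, x ^ 2 * gaussianBump x := by
        rw [integral_add (hK.const_mul _) (hKR.const_mul _), integral_const_mul,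
          integral_const_mul, integral_sub_right_eq_self (fun x => x ^ 2 * gaussianBump x) R]
        ring

lemma differentiable_sqrt_twoBump (hε0 : 0 < ε) (hε1 : ε < 1) :
    Differentiable ℝ fun x => √(twoBump ε R x) :=
  Differentiable.sqrt (by unfold twoBump; fun_prop) fun x => (twoBump_pos R hε0 hε1 x).ne'

lemma memLp_sqrt_twoBump (hε0 : 0 < ε) (hε1 : ε < 1) :
    MemLp (fun x => √(twoBump ε R x)) 2 := by
  rw [memLp_two_iff_integrable_sq
    (differentiable_sqrt_twoBump R hε0 hε1).continuous.aestronglyMeasurable]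
  simpa only [sq_sqrt_twoBump R hε0 hε1] using integrable_twoBump R

lemma memLp_deriv_sqrt_twoBump (hε0 : 0 < ε) (hε1 : ε < 1) :
    MemLp (deriv fun x => √(twoBump ε R x)) 2 := by
  rw [memLp_two_iff_integrable_sq (measurable_deriv _).aestronglyMeasurable]
  exact integrable_sq_deriv_sqrt_twoBump R hε0 hε1

end TwoBump

lemma pointChargeEnergy_sqrt_twoBump_le (z : ℝ) {ε R : ℝ} (hε0 : 0 < ε) (hε1 : ε < 1)
    (hR : 0 ≤ R) :
    pointChargeEnergy z (fun x => √(twoBump ε R x))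
      ≤ (∫ x, x ^ 2 * gaussianBump x) + max z 0 * ((∫ x, |x| * gaussianBump x) + ε * R)
        - (1 - ε) * ε * R := by
  have hρ := integrable_twoBump (ε := ε) R
  have hρ1 := integrable_abs_mul_twoBump (ε := ε) R
  have hm0 : 0 ≤ ∫ x, |x| * twoBump ε R x :=
    integral_nonneg fun x => mul_nonneg (abs_nonneg x) (twoBump_pos R hε0 hε1 x).le
  have hm := integral_abs_mul_twoBump_le R hε0.le
  rw [abs_of_nonneg hR] at hm
  have hzm : z * ∫ x, |x| * twoBump ε R x ≤ max z 0 * ((∫ x, |x| * gaussianBump x) + ε * R) :=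
    (mul_le_mul_of_nonneg_right (le_max_left z 0) hm0).trans
      (mul_le_mul_of_nonneg_left hm (le_max_right z 0))
  have hD := le_integral_abs_sub_mul_twoBump R hε0.le hε1.le
  have hK := integral_sq_deriv_sqrt_twoBump_le R hε0 hε1
  unfold pointChargeEnergy
  simp only [sq_sqrt_twoBump R hε0 hε1]
  rw [integral_integral_pointCharge hρ hρ1, integral_twoBump]
  linarith

/-- For `z < 1` the point-charge energy `E_z` is unbounded below on the
class of normalized `H¹` functions with finite first moment. -/
theorem stmt_5 (z : ℝ) (hz : z < 1) (M : ℝ) :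
    ∃ u : ℝ → ℝ, Differentiable ℝ u ∧ MemLp u 2 (volume : Measure ℝ) ∧
      MemLp (deriv u) 2 (volume : Measure ℝ) ∧
      (∫ x : ℝ, u x ^ 2) = 1 ∧
      Integrable (fun x : ℝ => |x| * u x ^ 2) ∧
      (∫ x : ℝ, deriv u x ^ 2) +
        (1/2) * (∫ x : ℝ, ∫ y : ℝ, (z * (|x| + |y|) - |x - y|) * u x ^ 2 * u y ^ 2) < M := by
  set w := max z 0
  have hw1 : w < 1 := max_lt hz one_pos
  set ε := (1 - w) / 2 with hε
  have hε0 : 0 < ε := by positivity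
  have hε1 : ε < 1 := by linarith [show 0 ≤ w from le_max_right z 0]
  set C := (∫ x, x ^ 2 * gaussianBump x) + w * ∫ x, |x| * gaussianBump x
  have hc : 0 < (1 - w) ^ 2 / 4 := by positivity
  obtain ⟨n, hn⟩ := exists_nat_gt ((C - M) / ((1 - w) ^ 2 / 4))
  set R : ℝ := (n : ℝ)
  have hR : C - M < (1 - w) ^ 2 / 4 * R := by rwa [div_lt_iff₀' hc] at hn
  refine ⟨fun x => √(twoBump ε R x), differentiable_sqrt_twoBump R hε0 hε1,
    memLp_sqrt_twoBump R hε0 hε1, memLp_deriv_sqrt_twoBump R hε0 hε1, ?_, ?_, ?_⟩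
  · simpa only [sq_sqrt_twoBump R hε0 hε1] using integral_twoBump R
  · simpa only [sq_sqrt_twoBump R hε0 hε1] using integrable_abs_mul_twoBump R
  · calc pointChargeEnergy z (fun x => √(twoBump ε R x))
        ≤ (∫ x, x ^ 2 * gaussianBump x) + w * ((∫ x, |x| * gaussianBump x) + ε * R)
          - (1 - ε) * ε * R := pointChargeEnergy_sqrt_twoBump_le z hε0 hε1 (Nat.cast_nonneg n)
      _ = C - (1 - w) ^ 2 / 4 * R := by ring
      _ < M := by linarith
end

section
/- Let (u_m) be a sequence of measurable functions ℝ → ℝ with ∫_ℝ u_m(x)² dx = 1 for all m, and suppose there is M < ∞ with C[u_m²] ≤ M for all m. Then there is a subsequence (given by a strictly increasing map φ : ℕ → ℕ) such that for every ε > 0 there exists R > 0 with ∫_{|x|>R} u_{φ(k)}(x)² dx < ε for all k; i.e., the subsequence is tight. -/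
open MeasureTheory ENNReal

/-- `C[f] = ∬_{xy>0} min(|x|,|y|) f(x) f(y) dx dy`, as an integral in `[0,∞]`
(applied below only to nonnegative `f`). -/
noncomputable def Clint (f : ℝ → ℝ) : ℝ≥0∞ :=
  ∫⁻ p in {p : ℝ × ℝ | 0 < p.1 * p.2},
    ENNReal.ofReal (min (|p.1|) (|p.2|) * f p.1 * f p.2)

lemma clint_key (f : ℝ → ℝ) (hf : Measurable f) (hnn : ∀ x, 0 ≤ f x)
    (R : ℝ) (hR : 0 < R) (s : Set ℝ)
    (hprod : ∀ x ∈ s, ∀ y ∈ s, 0 < x * y)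
    (habs : ∀ x ∈ s, R ≤ |x|) :
    ENNReal.ofReal R * (∫⁻ x in s, ENNReal.ofReal (f x)) ^ 2 ≤ Clint f := by
  set g : ℝ → ℝ≥0∞ := fun x => ENNReal.ofReal (f x) with hg
  have hgm : Measurable g := hf.ennreal_ofReal
  have h1 : (∫⁻ p in s ×ˢ s, ENNReal.ofReal R * (g p.1 * g p.2)) ≤ Clint f := by
    have hsub : s ×ˢ s ⊆ {p : ℝ × ℝ | 0 < p.1 * p.2} := fun p hp =>
      hprod p.1 hp.1 p.2 hp.2
    refine le_trans ?_ (lintegral_mono' (Measure.restrict_mono hsub le_rfl) le_rfl)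
    have hm2 : Measurable fun p : ℝ × ℝ =>
        ENNReal.ofReal (min (|p.1|) (|p.2|) * f p.1 * f p.2) :=
      Measurable.ennreal_ofReal
        (((measurable_fst.abs.min measurable_snd.abs).mul (hf.comp measurable_fst)).mul
          (hf.comp measurable_snd))
    refine setLIntegral_mono hm2 ?_
    rintro ⟨x, y⟩ ⟨hx, hy⟩
    simp only [hg]
    rw [← ENNReal.ofReal_mul (hnn x), ← ENNReal.ofReal_mul (by positivity)]
    refine ENNReal.ofReal_le_ofReal ?_
    have hmin : R ≤ min |x| |y| := le_min (habs x hx) (habs y hy)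
    calc R * (f x * f y) = R * (f x * f y) := rfl
      _ ≤ min |x| |y| * (f x * f y) :=
          mul_le_mul_of_nonneg_right hmin (mul_nonneg (hnn x) (hnn y))
      _ = min |x| |y| * f x * f y := by ring
  refine le_trans (le_of_eq ?_) h1
  have hgg : Measurable fun p : ℝ × ℝ => g p.1 * g p.2 :=
    (hgm.comp measurable_fst).mul (hgm.comp measurable_snd)
  rw [lintegral_const_mul _ hgg]
  congr 1
  have hrestr : (volume : Measure (ℝ × ℝ)).restrict (s ×ˢ s)
      = (volume.restrict s).prod (volume.restrict s) := by
    rw [Measure.prod_restrict, ← MeasureTheory.Measure.volume_eq_prod]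
  rw [sq, hrestr, lintegral_prod_mul hgm.aemeasurable hgm.aemeasurable]

/-- A sequence of normalized functions with uniformly bounded `C[u_m²]`
has a tight subsequence. -/
theorem stmt_7 (u : ℕ → ℝ → ℝ) (hmeas : ∀ m, Measurable (u m))
    (hnorm : ∀ m, (∫⁻ x : ℝ, ENNReal.ofReal (u m x ^ 2)) = 1)
    (M : ℝ) (hM : ∀ m, Clint (fun x => u m x ^ 2) ≤ ENNReal.ofReal M) :
    ∃ φ : ℕ → ℕ, StrictMono φ ∧
      ∀ ε : ℝ, 0 < ε → ∃ R : ℝ, 0 < R ∧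
        ∀ k : ℕ, (∫⁻ x in {x : ℝ | R < |x|}, ENNReal.ofReal (u (φ k) x ^ 2)) <
          ENNReal.ofReal ε := by
  refine ⟨id, strictMono_id, ?_⟩
  intro ε hε
  set M' := max M 0 with hM'def
  have hM'0 : 0 ≤ M' := le_max_right _ _
  set R := max 1 ((M' + 1) * (4 / ε) ^ 2) with hRdef
  have hR : 0 < R := lt_of_lt_of_le one_pos (le_max_left _ _)
  have hRge : (M' + 1) * (4 / ε) ^ 2 ≤ R := le_max_right _ _
  refine ⟨R, hR, ?_⟩
  intro k
  set m := (id : ℕ → ℕ) k with hmdef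
  have side : ∀ s : Set ℝ, (∀ x ∈ s, ∀ y ∈ s, 0 < x * y) → (∀ x ∈ s, R ≤ |x|) →
      (∫⁻ x in s, ENNReal.ofReal (u m x ^ 2)) ≤ ENNReal.ofReal (ε / 4) := by
    intro s hp ha
    by_contra hcon
    push_neg at hcon
    have hk := clint_key (fun x => u m x ^ 2) ((hmeas m).pow_const 2)
      (fun x => sq_nonneg _) R hR s hp ha
    have hC : Clint (fun x => u m x ^ 2) ≤ ENNReal.ofReal M' :=
      (hM m).trans (ENNReal.ofReal_le_ofReal (le_max_left _ _))
    have h2 : ENNReal.ofReal R * ENNReal.ofReal (ε / 4) ^ 2 ≤ ENNReal.ofReal M' := by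
      refine le_trans ?_ (hk.trans hC)
      exact mul_le_mul_right (pow_le_pow_left' hcon.le 2) _
    have h3 : ENNReal.ofReal (M' + 1) ≤ ENNReal.ofReal M' := by
      have heq : M' + 1 = (M' + 1) * (4 / ε) ^ 2 * (ε / 4) ^ 2 := by
        field_simp
      calc ENNReal.ofReal (M' + 1)
          = ENNReal.ofReal ((M' + 1) * (4 / ε) ^ 2) * ENNReal.ofReal ((ε / 4) ^ 2) := by
            rw [← ENNReal.ofReal_mul (by positivity), ← heq]
        _ ≤ ENNReal.ofReal R * ENNReal.ofReal (ε / 4) ^ 2 := by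
            rw [ENNReal.ofReal_pow (by positivity)]
            exact mul_le_mul_left (ENNReal.ofReal_le_ofReal hRge) _
        _ ≤ ENNReal.ofReal M' := h2
    rw [ENNReal.ofReal_le_ofReal_iff hM'0] at h3
    linarith
  have hpos := side (Set.Ioi R)
    (fun x hx y hy => mul_pos (hR.trans hx) (hR.trans hy))
    (fun x hx => le_trans (le_of_lt hx) (le_abs_self x))
  have hneg := side (Set.Iio (-R))
    (fun x hx y hy => mul_pos_of_neg_of_neg (by simp at hx; linarith) (by simp at hy; linarith))
    (fun x hx => by simp only [Set.mem_Iio] at hx; rw [le_abs]; right; linarith)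
  have hset : {x : ℝ | R < |x|} = Set.Iio (-R) ∪ Set.Ioi R := by
    ext x
    simp only [Set.mem_setOf_eq, Set.mem_union, Set.mem_Iio, Set.mem_Ioi, lt_abs]
    constructor
    · rintro (h | h)
      exacts [Or.inr h, Or.inl (by linarith)]
    · rintro (h | h)
      exacts [Or.inr (by linarith), Or.inl h]
  calc (∫⁻ x in {x : ℝ | R < |x|}, ENNReal.ofReal (u m x ^ 2))
      = ∫⁻ x in Set.Iio (-R) ∪ Set.Ioi R, ENNReal.ofReal (u m x ^ 2) := by rw [hset]
    _ ≤ (∫⁻ x in Set.Iio (-R), ENNReal.ofReal (u m x ^ 2))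
        + ∫⁻ x in Set.Ioi R, ENNReal.ofReal (u m x ^ 2) := lintegral_union_le _ _ _
    _ ≤ ENNReal.ofReal (ε / 4) + ENNReal.ofReal (ε / 4) := add_le_add hneg hpos
    _ = ENNReal.ofReal (ε / 4 + ε / 4) := (ENNReal.ofReal_add (by linarith) (by linarith)).symm
    _ < ENNReal.ofReal ε := (ENNReal.ofReal_lt_ofReal_iff hε).2 (by linarith)
end

section
/- Let M < ∞ and let (u_m) be a sequence of differentiable functions ℝ → ℝ such that for all m: ∫_ℝ u_m(x)² dx ≤ 1, ∫_ℝ (u_m'(x))² dx ≤ M, and C[u_m²] ≤ M. Then there exist a strictly increasing map φ : ℕ → ℕ and a square-integrable function u : ℝ → ℝ such that ‖u_{φ(k)} − u‖_{L²(ℝ)} → 0 as k → ∞. (That is, sets bounded in the ℬ-norm ‖u‖_{H¹} + C[u²]^{1/4} are relatively compact in L²(ℝ).) -/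
/-!
The kinetic bound makes every `u m` uniformly `1/2`-Hölder (Cauchy–Schwarz applied to
`u b - u a = ∫ₐᵇ u'`), and together with `∫ u² ≤ 1` uniformly bounded. A diagonal argument on a
countable dense set plus equicontinuity yields a subsequence converging at every point.
The bound on `C` prevents mass from escaping to infinity: if `∫_{x ≥ R} u² > δ` then
`C[u²] ≥ R δ²`, so the `L²` mass outside `(-R, R)` is small uniformly in `m`. Pointwise
convergence of a uniformly bounded, uniformly tight family gives `L²` convergence (Vitali).
-/

open MeasureTheory ENNReal Filter

open Set Topology

section eLpNormTwo

variable {α : Type*} [MeasurableSpace α] {μ : Measure α}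

theorem eLpNorm_two_sq_eq_lintegral (f : α → ℝ) :
    eLpNorm f 2 μ ^ 2 = ∫⁻ x, ENNReal.ofReal (f x ^ 2) ∂μ := by
  rw [eLpNorm_eq_lintegral_rpow_enorm_toReal two_ne_zero ofNat_ne_top, ← ENNReal.rpow_natCast,
    ← ENNReal.rpow_mul, toReal_ofNat, Nat.cast_ofNat, one_div_mul_cancel two_ne_zero,
    ENNReal.rpow_one]
  congr! 2 with x
  rw [Real.enorm_eq_ofReal_abs, ENNReal.rpow_ofNat, ← ENNReal.ofReal_pow (abs_nonneg _), sq_abs]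

theorem eLpNorm_two_le_sqrt_of_lintegral_sq_le {f : α → ℝ} {c : ℝ}
    (h : ∫⁻ x, ENNReal.ofReal (f x ^ 2) ∂μ ≤ ENNReal.ofReal c) :
    eLpNorm f 2 μ ≤ ENNReal.ofReal √c := by
  rw [← ENNReal.pow_le_pow_left_iff two_ne_zero, eLpNorm_two_sq_eq_lintegral,
    ← ENNReal.ofReal_pow (Real.sqrt_nonneg _), Real.sq_sqrt', ENNReal.ofReal_max,
    ENNReal.ofReal_zero]
  exact le_max_of_le_left h

end eLpNormTwo

theorem abs_sub_le_mul_sqrt_of_eLpNorm_deriv_le {f : ℝ → ℝ} (hf : Differentiable ℝ f) {L : ℝ}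
    (hL0 : 0 ≤ L) (hL : eLpNorm (deriv f) 2 volume ≤ ENNReal.ofReal L) (a b : ℝ) :
    |f b - f a| ≤ L * √|b - a| := by
  wlog hab : a ≤ b generalizing a b
  · rw [abs_sub_comm, abs_sub_comm b]
    exact this b a (le_of_not_ge hab)
  have hmem : MemLp (deriv f) 2 (volume.restrict (Ioc a b)) :=
    ⟨(measurable_deriv f).aestronglyMeasurable,
      (eLpNorm_restrict_le _ _ _ _).trans_lt (hL.trans_lt ofReal_lt_top)⟩
  have hint : IntervalIntegrable (deriv f) volume a b :=
    (intervalIntegrable_iff_integrableOn_Ioc_of_le hab).2 (hmem.integrable one_le_two)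
  have hL1 : eLpNorm (deriv f) 1 (volume.restrict (Ioc a b)) ≤ ENNReal.ofReal (L * √(b - a)) :=
    calc eLpNorm (deriv f) 1 (volume.restrict (Ioc a b))
        ≤ eLpNorm (deriv f) 2 (volume.restrict (Ioc a b)) *
            ENNReal.ofReal (b - a) ^ (1 / 2 : ℝ) := by
          convert eLpNorm_le_eLpNorm_mul_rpow_measure_univ one_le_two hmem.1 using 3 <;> norm_num
      _ ≤ ENNReal.ofReal L * ENNReal.ofReal (b - a) ^ (1 / 2 : ℝ) := by
          gcongr
          exact (eLpNorm_restrict_le _ _ _ _).trans hL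
      _ = ENNReal.ofReal (L * √(b - a)) := by
          rw [ENNReal.ofReal_rpow_of_nonneg (sub_nonneg.2 hab) (by norm_num),
            ← Real.sqrt_eq_rpow, ENNReal.ofReal_mul hL0]
  rw [abs_of_nonneg (sub_nonneg.2 hab),
    ← intervalIntegral.integral_deriv_eq_sub (fun x _ => hf x) hint,
    ← ENNReal.ofReal_le_ofReal_iff (by positivity), intervalIntegral.integral_of_le hab,
    ← Real.enorm_eq_ofReal_abs]
  calc ‖∫ x in Ioc a b, deriv f x‖ₑ
      ≤ ∫⁻ x in Ioc a b, ‖deriv f x‖ₑ := enorm_integral_le_lintegral_enorm _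
    _ ≤ _ := by rwa [← eLpNorm_one_eq_lintegral_enorm]

theorem abs_le_one_add_of_lintegral_sq_le_one {f : ℝ → ℝ} (hf : Measurable f) {L : ℝ}
    (hhol : ∀ a b, |f b - f a| ≤ L * √|b - a|) (h2 : ∫⁻ x, ENNReal.ofReal (f x ^ 2) ≤ 1)
    (x : ℝ) : |f x| ≤ 1 + L := by
  have hvol : volume (Icc x (x + 1)) = 1 := by simp [Real.volume_Icc]
  obtain ⟨y, hy, hfy⟩ := exists_le_setLAverage (hvol ▸ one_ne_zero) (hvol ▸ one_ne_top)
    (hf.pow_const 2).ennreal_ofReal.aemeasurable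
  have hy1 : |f y| ≤ 1 := by
    rw [setLAverage_eq, hvol, div_one] at hfy
    have := hfy.trans ((setLIntegral_le_lintegral _ _).trans h2)
    rwa [ENNReal.ofReal_le_one, sq_le_one_iff_abs_le_one] at this
  have hxy : √|x - y| ≤ 1 :=
    Real.sqrt_le_one.2 (by rw [abs_sub_comm, abs_of_nonneg] <;> linarith [hy.1, hy.2])
  have hL0 : 0 ≤ L := by simpa using (abs_nonneg _).trans (hhol 0 1)
  calc |f x| ≤ |f y| + |f x - f y| := by linarith [abs_sub_abs_le_abs_sub (f x) (f y)]
    _ ≤ 1 + L * √|x - y| := add_le_add hy1 (hhol y x)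
    _ ≤ 1 + L := by gcongr; exact mul_le_of_le_one_right hL0 hxy

theorem ofReal_mul_sq_setLIntegral_le_Clint {g : ℝ → ℝ} (hg : Measurable g) (hg0 : 0 ≤ g)
    {R : ℝ} {s : Set ℝ} (hs : MeasurableSet s) (hR : ∀ x ∈ s, R ≤ |x|)
    (hsign : ∀ x ∈ s, ∀ y ∈ s, 0 < x * y) :
    ENNReal.ofReal R * (∫⁻ x in s, ENNReal.ofReal (g x)) ^ 2 ≤ Clint g := by
  have hg' : Measurable fun x => ENNReal.ofReal (g x) := hg.ennreal_ofReal
  calc ENNReal.ofReal R * (∫⁻ x in s, ENNReal.ofReal (g x)) ^ 2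
      = ∫⁻ p in s ×ˢ s, ENNReal.ofReal R * (ENNReal.ofReal (g p.1) * ENNReal.ofReal (g p.2)) := by
        rw [Measure.volume_eq_prod, ← Measure.prod_restrict, lintegral_const_mul _ (by fun_prop),
          lintegral_prod_mul hg'.aemeasurable hg'.aemeasurable, sq]
    _ ≤ ∫⁻ p in s ×ˢ s, ENNReal.ofReal (min (|p.1|) (|p.2|) * g p.1 * g p.2) := by
        refine setLIntegral_mono' (hs.prod hs) fun p hp => ?_
        rw [← ENNReal.ofReal_mul (hg0 _), ← ENNReal.ofReal_mul' (mul_nonneg (hg0 _) (hg0 _)),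
          mul_assoc]
        exact ENNReal.ofReal_le_ofReal (mul_le_mul_of_nonneg_right
          (le_min (hR _ hp.1) (hR _ hp.2)) (mul_nonneg (hg0 _) (hg0 _)))
    _ ≤ Clint g := lintegral_mono_set fun p hp => hsign _ hp.1 _ hp.2

theorem setLIntegral_compl_Ioo_le_of_Clint_le {g : ℝ → ℝ} (hg : Measurable g) (hg0 : 0 ≤ g)
    {c δ : ℝ≥0∞} {R : ℝ} (hC : Clint g ≤ c) (hR : c < ENNReal.ofReal R * δ ^ 2) :
    ∫⁻ x in (Ioo (-R) R)ᶜ, ENNReal.ofReal (g x) ≤ 2 * δ := by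
  have hR0 : 0 < R := ENNReal.ofReal_pos.1 (pos_of_ne_zero fun h => by simp [h] at hR)
  have one_side (s : Set ℝ) (hs : MeasurableSet s) (hRs : ∀ x ∈ s, R ≤ |x|)
      (hsign : ∀ x ∈ s, ∀ y ∈ s, 0 < x * y) : ∫⁻ x in s, ENNReal.ofReal (g x) ≤ δ := by
    by_contra! hδ
    have := (ofReal_mul_sq_setLIntegral_le_Clint hg hg0 hs hRs hsign).trans hC
    exact (hR.trans_le (by gcongr)).not_ge this
  have hcompl : (Ioo (-R) R)ᶜ ⊆ Iic (-R) ∪ Ici R := fun x hx => by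
    simpa only [mem_compl_iff, mem_Ioo, not_and_or, not_lt, mem_union, mem_Iic, mem_Ici] using hx
  calc ∫⁻ x in (Ioo (-R) R)ᶜ, ENNReal.ofReal (g x)
      ≤ ∫⁻ x in Iic (-R) ∪ Ici R, ENNReal.ofReal (g x) := lintegral_mono_set hcompl
    _ ≤ (∫⁻ x in Iic (-R), ENNReal.ofReal (g x)) + ∫⁻ x in Ici R, ENNReal.ofReal (g x) :=
        lintegral_union_le _ _ _
    _ ≤ δ + δ := by
        gcongr
        · refine one_side _ measurableSet_Iic (fun x hx => ?_) fun x hx y hy => ?_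
          · rw [mem_Iic] at hx
            rw [abs_of_neg (by linarith)]
            linarith
          · exact mul_pos_of_neg_of_neg (by linarith [mem_Iic.1 hx]) (by linarith [mem_Iic.1 hy])
        · refine one_side _ measurableSet_Ici (fun x hx => ?_) fun x hx y hy => ?_
          · exact hx.trans (le_abs_self x)
          · exact mul_pos (hR0.trans_le hx) (hR0.trans_le hy)
    _ = 2 * δ := (two_mul δ).symm

theorem unifTight_of_Clint_le {ι : Type*} {f : ι → ℝ → ℝ} (hf : ∀ i, Measurable (f i))
    {c : ℝ≥0∞} (hc : c ≠ ⊤) (hC : ∀ i, Clint (fun x => f i x ^ 2) ≤ c) :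
    UnifTight f 2 volume := by
  intro ε hε
  set δ : ℝ≥0∞ := (ε : ℝ≥0∞) ^ 2 / 2
  have hδ0 : δ ^ 2 ≠ 0 := pow_ne_zero 2 (by simp [δ, hε.ne'])
  have hδtop : δ ^ 2 ≠ ⊤ := pow_ne_top (ENNReal.div_ne_top (pow_ne_top coe_ne_top) two_ne_zero)
  obtain ⟨n, hn⟩ := ENNReal.exists_nat_gt (ENNReal.div_ne_top hc hδ0)
  have hR : c < ENNReal.ofReal n * δ ^ 2 := by
    rwa [ENNReal.ofReal_natCast, ← ENNReal.div_lt_iff (Or.inl hδ0) (Or.inl hδtop)]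
  refine ⟨Ioo (-n) n, by simp [Real.volume_Ioo], fun i => ?_⟩
  rw [eLpNorm_indicator_eq_eLpNorm_restrict measurableSet_Ioo.compl,
    ← ENNReal.pow_le_pow_left_iff two_ne_zero, eLpNorm_two_sq_eq_lintegral]
  calc ∫⁻ x in (Ioo (-(n : ℝ)) n)ᶜ, ENNReal.ofReal (f i x ^ 2)
      ≤ 2 * δ := setLIntegral_compl_Ioo_le_of_Clint_le ((hf i).pow_const 2)
        (fun x => sq_nonneg _) (hC i) hR
    _ = (ε : ℝ≥0∞) ^ 2 := ENNReal.mul_div_cancel two_ne_zero ofNat_ne_top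

theorem unifIntegrable_of_forall_norm_le {α β ι : Type*} [MeasurableSpace α]
    [NormedAddCommGroup β] {μ : Measure α} {p : ℝ≥0∞} (hp : 1 ≤ p) (hp' : p ≠ ⊤)
    {f : ι → α → β} (hf : ∀ i, AEStronglyMeasurable (f i) μ) {C : ℝ} (hC : ∀ i x, ‖f i x‖ ≤ C) :
    UnifIntegrable f p μ := by
  refine unifIntegrable_of hp hp' hf fun ε _ => ⟨C.toNNReal + 1, fun i => ?_⟩
  have hempty : {x | C.toNNReal + 1 ≤ ‖f i x‖₊} = ∅ := by
    ext x
    simp only [mem_ofPred_eq, mem_empty_iff_false, iff_false, not_le]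
    rw [← NNReal.coe_lt_coe, coe_nnnorm]
    exact (hC i x).trans_lt ((le_max_left C 0).trans_lt (by simp))
  simp [hempty]

theorem EquicontinuousAt.cauchySeq_of_mem_closure {X α : Type*} [TopologicalSpace X]
    [PseudoMetricSpace α] {F : ℕ → X → α} {s : Set X} {x : X} (hF : EquicontinuousAt F x)
    (hx : x ∈ closure s) (hs : ∀ y ∈ s, CauchySeq fun n => F n y) :
    CauchySeq fun n => F n x := by
  rw [Metric.cauchySeq_iff]
  intro ε hε
  obtain ⟨y, hy, hxy⟩ : ∃ y ∈ s, ∀ n, dist (F n x) (F n y) < ε / 3 :=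
    (mem_closure_iff_frequently.1 hx).and_eventually
      (Metric.equicontinuousAt_iff_right.1 hF _ (by positivity)) |>.exists
  obtain ⟨N, hN⟩ := Metric.cauchySeq_iff.1 (hs y hy) (ε / 3) (by positivity)
  refine ⟨N, fun m hm n hn => ?_⟩
  calc dist (F m x) (F n x)
      ≤ dist (F m x) (F m y) + dist (F m y) (F n y) + dist (F n y) (F n x) :=
        dist_triangle4 _ _ _ _
    _ < ε / 3 + ε / 3 + ε / 3 := by
        gcongr
        · exact hxy m
        · exact hN m hm n hn
        · rw [dist_comm]
          exact hxy n
    _ = ε := by ring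

theorem exists_subseq_tendsto_of_equicontinuous {X α : Type*} [TopologicalSpace X]
    [TopologicalSpace.SeparableSpace X] [PseudoMetricSpace α] [CompleteSpace α]
    {F : ℕ → X → α} (hF : Equicontinuous F) {K : Set α} (hK : IsCompact K)
    (hFK : ∀ n x, F n x ∈ K) :
    ∃ φ : ℕ → ℕ, StrictMono φ ∧ ∃ g : X → α, ∀ x, Tendsto (fun k => F (φ k) x) atTop (𝓝 (g x)) := by
  obtain ⟨s, hsc, hsd⟩ := TopologicalSpace.exists_countable_dense X
  have := hsc.to_subtype
  obtain ⟨_, -, φ, hφ, hlim⟩ := (isCompact_univ_pi fun _ : s => hK).isSeqCompact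
    (x := fun n (y : s) => F n y) fun n => mem_univ_pi.2 fun y => hFK n y
  have hcauchy (x : X) : CauchySeq fun k => F (φ k) x :=
    ((hF.comp φ) x).cauchySeq_of_mem_closure (hsd.closure_eq ▸ mem_univ x)
      fun y hy => (tendsto_pi_nhds.1 hlim ⟨y, hy⟩).cauchySeq
  choose g hg using fun x => cauchySeq_tendsto_of_complete (hcauchy x)
  exact ⟨φ, hφ, g, hg⟩

/-- Sets bounded in the ℬ-norm (`L²` norm, kinetic energy and `C[u²]`
all bounded) are relatively compact in `L²(ℝ)`: any such sequence has a subsequence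
converging strongly in `L²` to some square-integrable `u`. -/
theorem stmt_8 (M : ℝ) (u : ℕ → ℝ → ℝ) (hdiff : ∀ m, Differentiable ℝ (u m))
    (hL2 : ∀ m, (∫⁻ x : ℝ, ENNReal.ofReal (u m x ^ 2)) ≤ 1)
    (hkin : ∀ m, (∫⁻ x : ℝ, ENNReal.ofReal (deriv (u m) x ^ 2)) ≤ ENNReal.ofReal M)
    (hC : ∀ m, Clint (fun x => u m x ^ 2) ≤ ENNReal.ofReal M) :
    ∃ φ : ℕ → ℕ, StrictMono φ ∧ ∃ v : ℝ → ℝ, MemLp v 2 (volume : Measure ℝ) ∧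
      Tendsto (fun k => eLpNorm (u (φ k) - v) 2 (volume : Measure ℝ)) atTop (nhds 0) := by
  have hmeas (m : ℕ) : Measurable (u m) := (hdiff m).continuous.measurable
  have hhol (m : ℕ) (a b : ℝ) : |u m b - u m a| ≤ √M * √|b - a| :=
    abs_sub_le_mul_sqrt_of_eLpNorm_deriv_le (hdiff m) (Real.sqrt_nonneg M)
      (eLpNorm_two_le_sqrt_of_lintegral_sq_le (hkin m)) a b
  have hbdd (m : ℕ) (x : ℝ) : |u m x| ≤ 1 + √M :=
    abs_le_one_add_of_lintegral_sq_le_one (hmeas m) (hhol m) (hL2 m) x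
  have hequi : Equicontinuous u := by
    refine Metric.equicontinuous_of_continuity_modulus (fun t => √M * √t) ?_ u fun x y m => ?_
    · simpa using (Real.continuous_sqrt.tendsto 0).const_mul √M
    · rw [Real.dist_eq, Real.dist_eq]
      exact hhol m y x
  obtain ⟨φ, hφ, v, hv⟩ := exists_subseq_tendsto_of_equicontinuous hequi isCompact_Icc
    fun m x => mem_Icc.2 (abs_le.1 (hbdd m x))
  have hsm (k : ℕ) : AEStronglyMeasurable (u (φ k)) volume := (hmeas _).aestronglyMeasurable
  have hvL2 : MemLp v 2 volume := by
    refine ⟨aestronglyMeasurable_of_tendsto_ae atTop hsm (ae_of_all _ hv),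
      (Lp.eLpNorm_le_of_ae_tendsto (Eventually.of_forall fun k => ?_) hsm
        (ae_of_all _ hv)).trans_lt one_lt_top⟩
    rw [← ENNReal.pow_le_pow_left_iff two_ne_zero, one_pow, eLpNorm_two_sq_eq_lintegral]
    exact hL2 _
  exact ⟨φ, hφ, v, hvL2, tendsto_Lp_of_tendsto_ae one_le_two ofNat_ne_top hsm hvL2
    (unifIntegrable_of_forall_norm_le one_le_two ofNat_ne_top hsm fun k x => hbdd (φ k) x)
    (unifTight_of_Clint_le (fun k => hmeas _) ofReal_ne_top fun k => hC (φ k)) (ae_of_all _ hv)⟩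
end

section
/- Let n ≥ 1 and let g : ℝⁿ → [0,∞) be measurable and radially nondecreasing, i.e. g(x) ≤ g(y) whenever ‖x‖ ≤ ‖y‖ (in particular g is spherically symmetric). Let A ⊆ ℝⁿ be measurable with finite Lebesgue measure and let B be a closed ball centred at the origin with the same Lebesgue measure as A. Then ∫_A g(x) dx ≥ ∫_B g(x) dx, both integrals taking values in [0,∞]. -/
open MeasureTheory ENNReal Metric Set

/-!
By the layer-cake formula it suffices to compare, for each level `t`, the measures of the
superlevel set `S = {t < g}` inside the ball `B` and inside `A`. Since `g` is radially
nondecreasing, `Sᶜ` is radially downward closed, so either `B ⊆ Sᶜ` or `Sᶜ ⊆ B`; in both cases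
`|A \ S| ≤ |B \ S|`, and cancelling this finite quantity from `|B| = |A|` gives `|B ∩ S| ≤ |A ∩ S|`.
-/

section MeasureComparison

variable {α : Type*} [MeasurableSpace α]

theorem lintegral_ofReal_le_of_measure_lt_le {μ ν : Measure α} {f : α → ℝ}
    (hf_nonneg : ∀ x, 0 ≤ f x) (hf : Measurable f)
    (h : ∀ t, μ {x | t < f x} ≤ ν {x | t < f x}) :
    ∫⁻ x, ENNReal.ofReal (f x) ∂μ ≤ ∫⁻ x, ENNReal.ofReal (f x) ∂ν := by
  rw [lintegral_eq_lintegral_meas_lt μ (.of_forall hf_nonneg) hf.aemeasurable,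
    lintegral_eq_lintegral_meas_lt ν (.of_forall hf_nonneg) hf.aemeasurable]
  exact lintegral_mono fun t => h t

theorem measure_inter_le_of_measure_sdiff_le {μ : Measure α} {A B S : Set α}
    (hS : MeasurableSet S) (hvol : μ B = μ A) (hA : μ A ≠ ∞)
    (hdiff : μ (A \ S) ≤ μ (B \ S)) : μ (B ∩ S) ≤ μ (A ∩ S) := by
  have hAS : μ (A \ S) ≠ ∞ := measure_ne_top_of_subset sdiff_subset hA
  refine (ENNReal.add_le_add_iff_right hAS).mp ?_
  calc μ (B ∩ S) + μ (A \ S) ≤ μ (B ∩ S) + μ (B \ S) := by gcongr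
    _ = μ A := by rw [measure_inter_add_sdiff B hS, hvol]
    _ = μ (A ∩ S) + μ (A \ S) := (measure_inter_add_sdiff A hS).symm

end MeasureComparison

section RadialSets

variable {E : Type*} [SeminormedAddGroup E]

theorem closedBall_zero_subset_or_subset_closedBall {D : Set E}
    (hD : ∀ x ∈ D, ∀ y, ‖y‖ ≤ ‖x‖ → y ∈ D) (r : ℝ) :
    closedBall 0 r ⊆ D ∨ D ⊆ closedBall 0 r := by
  by_cases h : ∃ x ∈ D, r ≤ ‖x‖
  · obtain ⟨x, hx, hrx⟩ := h
    exact .inl fun y hy => hD x hx y ((mem_closedBall_zero_iff.mp hy).trans hrx)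
  · push Not at h
    exact .inr fun x hx => mem_closedBall_zero_iff.mpr (h x hx).le

variable [MeasurableSpace E] {μ : Measure E}

theorem measure_inter_le_measure_closedBall_inter {A D : Set E} {r : ℝ}
    (hD : ∀ x ∈ D, ∀ y, ‖y‖ ≤ ‖x‖ → y ∈ D) (hvol : μ (closedBall 0 r) = μ A) :
    μ (A ∩ D) ≤ μ (closedBall 0 r ∩ D) := by
  rcases closedBall_zero_subset_or_subset_closedBall hD r with hball | hball
  · rw [inter_eq_left.mpr hball, hvol]
    exact measure_mono inter_subset_left
  · rw [inter_eq_right.mpr hball]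
    exact measure_mono inter_subset_right

theorem measure_superlevel_inter_closedBall_le {g : E → ℝ} (hg : Measurable g)
    (hmono : ∀ x y, ‖x‖ ≤ ‖y‖ → g x ≤ g y) {A : Set E} (hA : μ A ≠ ∞) {r : ℝ}
    (hvol : μ (closedBall 0 r) = μ A) (t : ℝ) :
    μ ({x | t < g x} ∩ closedBall 0 r) ≤ μ ({x | t < g x} ∩ A) := by
  have hS : MeasurableSet {x | t < g x} := measurableSet_lt measurable_const hg
  have hsublevel : ∀ x ∈ {x | t < g x}ᶜ, ∀ y, ‖y‖ ≤ ‖x‖ → y ∈ {x | t < g x}ᶜ := by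
    intro x hx y hyx
    simp only [mem_compl_iff, mem_ofPred_eq, not_lt] at hx ⊢
    exact (hmono y x hyx).trans hx
  rw [inter_comm, inter_comm _ A]
  refine measure_inter_le_of_measure_sdiff_le hS hvol hA ?_
  simpa only [sdiff_eq] using measure_inter_le_measure_closedBall_inter hsublevel hvol

end RadialSets

theorem stmt_11_general (n : ℕ) (g : EuclideanSpace ℝ (Fin n) → ℝ)
    (hgmeas : Measurable g) (hgnonneg : ∀ x, 0 ≤ g x)
    (hgmono : ∀ x y : EuclideanSpace ℝ (Fin n), ‖x‖ ≤ ‖y‖ → g x ≤ g y)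
    (A : Set (EuclideanSpace ℝ (Fin n))) (hAfin : volume A < ⊤)
    (r : ℝ)
    (hvol : volume (Metric.closedBall (0 : EuclideanSpace ℝ (Fin n)) r) = volume A) :
    (∫⁻ x in Metric.closedBall (0 : EuclideanSpace ℝ (Fin n)) r, ENNReal.ofReal (g x)) ≤
      ∫⁻ x in A, ENNReal.ofReal (g x) := by
  refine lintegral_ofReal_le_of_measure_lt_le hgnonneg hgmeas fun t => ?_
  have hS : MeasurableSet {x | t < g x} := measurableSet_lt measurable_const hgmeas
  rw [Measure.restrict_apply hS, Measure.restrict_apply hS]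
  exact measure_superlevel_inter_closedBall_le hgmeas hgmono hAfin.ne hvol t

/-- For a radially nondecreasing nonnegative `g` on `ℝⁿ`, a measurable
set `A` of finite measure, and a closed ball `B` centred at the origin of the same
measure, `∫_A g ≥ ∫_B g` (integrals valued in `[0,∞]`). -/
theorem stmt_11 (n : ℕ) (hn : 1 ≤ n) (g : EuclideanSpace ℝ (Fin n) → ℝ)
    (hgmeas : Measurable g) (hgnonneg : ∀ x, 0 ≤ g x)
    (hgmono : ∀ x y : EuclideanSpace ℝ (Fin n), ‖x‖ ≤ ‖y‖ → g x ≤ g y)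
    (A : Set (EuclideanSpace ℝ (Fin n))) (hA : MeasurableSet A) (hAfin : volume A < ⊤)
    (r : ℝ) (hr : 0 ≤ r)
    (hvol : volume (Metric.closedBall (0 : EuclideanSpace ℝ (Fin n)) r) = volume A) :
    (∫⁻ x in Metric.closedBall (0 : EuclideanSpace ℝ (Fin n)) r, ENNReal.ofReal (g x)) ≤
      ∫⁻ x in A, ENNReal.ofReal (g x) :=
  stmt_11_general n g hgmeas hgnonneg hgmono A hAfin r hvol
end

section
/- Let n ≥ 1 and let g : ℝⁿ → ℝ be measurable, spherically symmetric (g(x) = g(y) whenever ‖x‖ = ‖y‖) and strictly radially increasing (g(x) < g(y) whenever ‖x‖ < ‖y‖). Let A ⊆ ℝⁿ be measurable with 0 < μ(A) < ∞ and g integrable on A, and let B be the open ball centred at the origin with μ(B) = μ(A). If μ(A Δ B) > 0 (A is not almost everywhere equal to B), then ∫_A g(x) dx > ∫_B g(x) dx. -/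
/-!
This is the bathtub principle. Let `x₀` be a point of norm `r` and `c = g x₀`. Then `g < c` on
`B \ A` and `g ≥ c` on `A \ B`; these two differences have the same measure since `μ A = μ B`,
and it is positive because `A` and `B` are not a.e. equal. Hence
`∫_B g = ∫_{A∩B} g + ∫_{B\A} g < ∫_{A∩B} g + c μ(B\A) = ∫_{A∩B} g + c μ(A\B) ≤ ∫_A g`.
-/

open MeasureTheory ENNReal Set

section Bathtub

variable {α : Type*} [MeasurableSpace α] {μ : Measure α} {g : α → ℝ} {s A B : Set α}
  {c : ℝ}

theorem setIntegral_lt_measureReal_mul_of_forall_lt (hs : MeasurableSet s) (hμs : μ s ≠ ∞)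
    (hpos : 0 < μ s) (hg : IntegrableOn g s μ) (hlt : ∀ x ∈ s, g x < c) :
    ∫ x in s, g x ∂μ < μ.real s * c := by
  have hc : IntegrableOn (fun _ ↦ c) s μ := integrableOn_const hμs
  have hgap : 0 < ∫ x in s, (c - g x) ∂μ := by
    rw [setIntegral_pos_iff_support_of_nonneg_ae (f := fun x ↦ c - g x) _ (hc.sub hg)]
    · refine hpos.trans_le (measure_mono fun x hx ↦ ⟨?_, hx⟩)
      exact sub_ne_zero.2 (hlt x hx).ne'
    · filter_upwards [ae_restrict_mem hs] with x hx
      exact sub_nonneg.2 (hlt x hx).le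
  rw [integral_sub hc hg, setIntegral_const, smul_eq_mul] at hgap
  linarith

theorem measureReal_mul_le_setIntegral_of_forall_le (hs : MeasurableSet s) (hμs : μ s ≠ ∞)
    (hg : IntegrableOn g s μ) (hle : ∀ x ∈ s, c ≤ g x) :
    μ.real s * c ≤ ∫ x in s, g x ∂μ := by
  simpa only [setIntegral_const, smul_eq_mul] using
    setIntegral_mono_on (integrableOn_const hμs) hg hs hle

theorem setIntegral_lt_setIntegral_of_measure_eq_of_separated (hA : MeasurableSet A)
    (hB : MeasurableSet B) (hAB : μ A = μ B) (hfin : μ A ≠ ∞) (hdiff : 0 < μ (symmDiff A B))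
    (hgA : IntegrableOn g A μ) (hgB : IntegrableOn g B μ)
    (hlt : ∀ x ∈ B \ A, g x < c) (hle : ∀ x ∈ A \ B, c ≤ g x) :
    ∫ x in B, g x ∂μ < ∫ x in A, g x ∂μ := by
  have hfinAB : μ (A \ B) ≠ ∞ := measure_ne_top_of_subset sdiff_subset hfin
  have hfinBA : μ (B \ A) ≠ ∞ := measure_ne_top_of_subset sdiff_subset (hAB ▸ hfin)
  have hsymm : μ (A \ B) = μ (B \ A) := measure_sdiff_symm hA.nullMeasurableSet
    hB.nullMeasurableSet hAB (measure_ne_top_of_subset inter_subset_left hfin)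
  have hpos : 0 < μ (B \ A) := by
    rw [measure_symmDiff_eq hA.nullMeasurableSet hB.nullMeasurableSet, hsymm] at hdiff
    exact pos_of_ne_zero fun h ↦ by simp [h] at hdiff
  have hsplitA := integral_inter_add_sdiff hB hgA
  have hsplitB := integral_inter_add_sdiff hA hgB
  rw [inter_comm] at hsplitB
  have hBdiff := setIntegral_lt_measureReal_mul_of_forall_lt (hB.diff hA) hfinBA hpos
    (hgB.mono_set sdiff_subset) hlt
  have hAdiff := measureReal_mul_le_setIntegral_of_forall_le (hA.diff hB) hfinAB
    (hgA.mono_set sdiff_subset) hle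
  rw [measureReal_def, hsymm, ← measureReal_def] at hAdiff
  linarith

end Bathtub

section Radial

variable {E : Type*} [NormedAddCommGroup E] {g : E → ℝ}

theorem le_of_norm_le_of_radial (hsymm : ∀ x y : E, ‖x‖ = ‖y‖ → g x = g y)
    (hmono : ∀ x y : E, ‖x‖ < ‖y‖ → g x < g y) : ∀ x y : E, ‖x‖ ≤ ‖y‖ → g x ≤ g y :=
  fun x y h ↦ h.lt_or_eq.elim (fun h ↦ (hmono x y h).le) fun h ↦ (hsymm x y h).le

theorem integrableOn_ball_of_norm_monotone [MeasurableSpace E] [OpensMeasurableSpace E]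
    {μ : Measure E} (hg : Measurable g) (hmono : ∀ x y : E, ‖x‖ ≤ ‖y‖ → g x ≤ g y) {x₀ : E}
    (hμ : μ (Metric.ball 0 ‖x₀‖) ≠ ∞) :
    IntegrableOn g (Metric.ball 0 ‖x₀‖) μ := by
  refine integrable_of_le_of_le (g₁ := fun _ ↦ g 0) (g₂ := fun _ ↦ g x₀)
    hg.aestronglyMeasurable ?_ ?_ (integrableOn_const hμ) (integrableOn_const hμ)
  · exact ae_of_all _ fun x ↦ hmono 0 x (by simp)
  · exact (ae_restrict_mem measurableSet_ball).mono fun x hx ↦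
      hmono x x₀ (by simpa using (Metric.mem_ball.1 hx).le)

end Radial

/-- For a spherically symmetric, strictly radially increasing `g` on
`ℝⁿ`, a measurable set `A` with `0 < μ(A) < ∞` on which `g` is integrable, and the
open ball `B` centred at `0` with `μ(B) = μ(A)`, if `μ(A Δ B) > 0` then
`∫_A g > ∫_B g`. -/
theorem stmt_12 (n : ℕ) (hn : 1 ≤ n) (g : EuclideanSpace ℝ (Fin n) → ℝ)
    (hgmeas : Measurable g)
    (hgsymm : ∀ x y : EuclideanSpace ℝ (Fin n), ‖x‖ = ‖y‖ → g x = g y)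
    (hgmono : ∀ x y : EuclideanSpace ℝ (Fin n), ‖x‖ < ‖y‖ → g x < g y)
    (A : Set (EuclideanSpace ℝ (Fin n))) (hA : MeasurableSet A)
    (hApos : 0 < volume A) (hAfin : volume A < ⊤)
    (hint : IntegrableOn g A)
    (r : ℝ)
    (hvol : volume (Metric.ball (0 : EuclideanSpace ℝ (Fin n)) r) = volume A)
    (hdiff : 0 < volume (symmDiff A (Metric.ball (0 : EuclideanSpace ℝ (Fin n)) r))) :
    (∫ x in Metric.ball (0 : EuclideanSpace ℝ (Fin n)) r, g x) < ∫ x in A, g x := by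
  have hr : 0 < r := Metric.nonempty_ball.1 (nonempty_of_measure_ne_zero (hvol ▸ hApos.ne'))
  have : Nonempty (Fin n) := ⟨⟨0, hn⟩⟩
  obtain ⟨x₀, rfl⟩ := exists_norm_eq (EuclideanSpace ℝ (Fin n)) hr.le
  have hle := le_of_norm_le_of_radial hgsymm hgmono
  have hintB := integrableOn_ball_of_norm_monotone hgmeas hle (hvol ▸ hAfin.ne)
  refine setIntegral_lt_setIntegral_of_measure_eq_of_separated (c := g x₀) hA measurableSet_ball
    hvol.symm hAfin.ne hdiff hint hintB ?_ ?_
  · rintro x ⟨hxB, -⟩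
    exact hgmono x x₀ (by simpa using hxB)
  · rintro x ⟨-, hxB⟩
    exact hle x₀ x (by simpa using hxB)
end

section
/- Let h : ℝ × ℝ → [0,∞) be measurable, even in each variable (h(−x,y) = h(x,y) = h(x,−y)), and monotone in the sense that h(x,y) ≤ h(x',y') whenever |x| ≤ |x'| and |y| ≤ |y'|. Let A, B ⊆ ℝ be measurable sets of finite Lebesgue measure, and let A* and B* be the open intervals centred at 0 with the same Lebesgue measures as A and B respectively. Then ∬_{A×B} h(x,y) dx dy ≥ ∬_{A*×B*} h(x,y) dx dy, both integrals taking values in [0,∞]. -/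
open MeasureTheory ENNReal

/-! It suffices to rearrange one variable at a time: after replacing `(-b, b)` by `B` in the inner
integral, `x ↦ ∫⁻ y in B, h (x, y)` is still monotone in `|x|`. In one variable, `(-b, b)` and
`B` have equal measure and share `(-b, b) ∩ B`; the remainders `(-b, b) \ B` and `B \ (-b, b)`
then have equal measure, and the integrand is at most its value at `b` on the first and at least
that value on the second. -/

theorem setLIntegral_le_of_le_on_of_le_off {α : Type*} [MeasurableSpace α] {μ : Measure α}
    {f : α → ℝ≥0∞} {s t : Set α} {c : ℝ≥0∞} (hs : MeasurableSet s) (ht : MeasurableSet t)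
    (hμs : μ s ≠ ∞) (hμst : μ s = μ t) (hf_on : ∀ x ∈ s, f x ≤ c) (hf_off : ∀ x ∉ s, c ≤ f x) :
    ∫⁻ x in s, f x ∂μ ≤ ∫⁻ x in t, f x ∂μ := by
  have hμ_sdiff : μ (s \ t) = μ (t \ s) := by
    have hfin : μ (s ∩ t) ≠ ∞ := measure_ne_top_of_subset Set.inter_subset_left hμs
    refine (ENNReal.add_right_inj hfin).mp ?_
    rw [measure_inter_add_sdiff s ht, hμst, ← measure_inter_add_sdiff t hs, Set.inter_comm]
  rw [← lintegral_inter_add_sdiff f s ht, ← lintegral_inter_add_sdiff f t hs, Set.inter_comm t s]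
  refine add_le_add le_rfl ?_
  calc ∫⁻ x in s \ t, f x ∂μ ≤ ∫⁻ _ in s \ t, c ∂μ :=
        setLIntegral_mono' (hs.diff ht) fun x hx => hf_on x hx.1
    _ = ∫⁻ _ in t \ s, c ∂μ := by rw [setLIntegral_const, setLIntegral_const, hμ_sdiff]
    _ ≤ ∫⁻ x in t \ s, f x ∂μ := setLIntegral_mono' (ht.diff hs) fun x hx => hf_off x hx.2

theorem setLIntegral_Ioo_neg_le_of_abs_mono {f : ℝ → ℝ≥0∞}
    (hf : ∀ y z : ℝ, |y| ≤ |z| → f y ≤ f z) {B : Set ℝ} (hB : MeasurableSet B) {b : ℝ}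
    (hvol : volume (Set.Ioo (-b) b) = volume B) :
    ∫⁻ y in Set.Ioo (-b) b, f y ≤ ∫⁻ y in B, f y := by
  rcases le_or_gt b 0 with hb | hb
  · simp [Set.Ioo_eq_empty (by linarith : ¬ -b < b)]
  refine setLIntegral_le_of_le_on_of_le_off (c := f b) measurableSet_Ioo hB
    measure_Ioo_lt_top.ne hvol (fun y hy => hf y b ?_) (fun z hz => hf b z ?_)
  · rw [abs_of_pos hb]
    exact (abs_lt.mpr hy).le
  · rw [abs_of_pos hb]
    by_contra! hzb
    exact hz (abs_lt.mp hzb)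

theorem stmt_13_general (h : ℝ × ℝ → ℝ)
    (hmono : ∀ x y x' y' : ℝ, |x| ≤ |x'| → |y| ≤ |y'| → h (x, y) ≤ h (x', y'))
    (A B : Set ℝ) (hA : MeasurableSet A) (hB : MeasurableSet B)
    (a b : ℝ)
    (hvolA : volume (Set.Ioo (-a) a) = volume A)
    (hvolB : volume (Set.Ioo (-b) b) = volume B) :
    (∫⁻ x in Set.Ioo (-a) a, ∫⁻ y in Set.Ioo (-b) b, ENNReal.ofReal (h (x, y))) ≤
      ∫⁻ x in A, ∫⁻ y in B, ENNReal.ofReal (h (x, y)) := by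
  calc (∫⁻ x in Set.Ioo (-a) a, ∫⁻ y in Set.Ioo (-b) b, ENNReal.ofReal (h (x, y)))
      ≤ ∫⁻ x in Set.Ioo (-a) a, ∫⁻ y in B, ENNReal.ofReal (h (x, y)) :=
        lintegral_mono fun x => setLIntegral_Ioo_neg_le_of_abs_mono
          (fun y y' hy => ENNReal.ofReal_le_ofReal (hmono x y x y' le_rfl hy)) hB hvolB
    _ ≤ ∫⁻ x in A, ∫⁻ y in B, ENNReal.ofReal (h (x, y)) :=
        setLIntegral_Ioo_neg_le_of_abs_mono (fun x x' hx => lintegral_mono fun y =>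
          ENNReal.ofReal_le_ofReal (hmono x y x' y hx le_rfl)) hA hvolA

/-- For a nonnegative kernel `h`, even in each variable and monotone
in the absolute values of its arguments, and measurable sets `A`, `B` of finite
measure with symmetric rearrangements the open intervals `(-a,a)`, `(-b,b)` of the
same measures, `∬_{A×B} h ≥ ∬_{A*×B*} h` (integrals valued in `[0,∞]`). -/
theorem stmt_13 (h : ℝ × ℝ → ℝ) (hmeas : Measurable h) (hnonneg : ∀ p, 0 ≤ h p)
    (hevenx : ∀ x y : ℝ, h (-x, y) = h (x, y))
    (heveny : ∀ x y : ℝ, h (x, -y) = h (x, y))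
    (hmono : ∀ x y x' y' : ℝ, |x| ≤ |x'| → |y| ≤ |y'| → h (x, y) ≤ h (x', y'))
    (A B : Set ℝ) (hA : MeasurableSet A) (hB : MeasurableSet B)
    (hAfin : volume A < ⊤) (hBfin : volume B < ⊤)
    (a b : ℝ) (ha : 0 ≤ a) (hb : 0 ≤ b)
    (hvolA : volume (Set.Ioo (-a) a) = volume A)
    (hvolB : volume (Set.Ioo (-b) b) = volume B) :
    (∫⁻ x in Set.Ioo (-a) a, ∫⁻ y in Set.Ioo (-b) b, ENNReal.ofReal (h (x, y))) ≤
      ∫⁻ x in A, ∫⁻ y in B, ENNReal.ofReal (h (x, y)) :=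
  stmt_13_general h hmono A B hA hB a b hvolA hvolB
end

section
/- Let f : ℝ → ℝ be smooth with compact support and ∫_ℝ f(x) dx = 0. Then ⟨f,f⟩ := −∬_{ℝ×ℝ} |x−y| f(x) f(y) dx dy ≥ 0, and ⟨f,f⟩ = 0 if and only if f is identically zero. Consequently (f,g) ↦ −∬ |x−y| f(x) g(y) dx dy is an inner product on the space of smooth compactly supported functions of mean zero. -/
open MeasureTheory ENNReal

private lemma Iio_eq_intervalIntegral {g : ℝ → ℝ} (hg : Integrable g) {c x : ℝ}
    (hcx : c ≤ x) (hgc : ∀ y ≤ c, g y = 0) :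
    ∫ y in Set.Iio x, g y = ∫ y in c..x, g y := by
  rw [intervalIntegral.integral_of_le hcx, ← integral_Iic_eq_integral_Iio]
  have hset : Set.Iic x = Set.Iic c ∪ Set.Ioc c x := (Set.Iic_union_Ioc_eq_Iic hcx).symm
  have h0 : (∫ y in Set.Iic c, g y) = 0 :=
    setIntegral_eq_zero_of_forall_eq_zero (fun y hy => hgc y hy)
  rw [hset, setIntegral_union (Set.Iic_disjoint_Ioc le_rfl) measurableSet_Ioc
    hg.integrableOn hg.integrableOn, h0, zero_add]

private lemma Ioi_eq_intervalIntegral {g : ℝ → ℝ} (hg : Integrable g) {x d : ℝ}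
    (hxd : x ≤ d) (hgd : ∀ y, d ≤ y → g y = 0) :
    ∫ y in Set.Ioi x, g y = ∫ y in x..d, g y := by
  rw [intervalIntegral.integral_of_le hxd]
  have hset : Set.Ioi x = Set.Ioc x d ∪ Set.Ioi d := (Set.Ioc_union_Ioi_eq_Ioi hxd).symm
  have hdisj : Disjoint (Set.Ioc x d) (Set.Ioi d) := by
    rw [Set.disjoint_left]
    rintro y ⟨_, h1⟩ h2
    exact absurd h1 (not_le.2 h2)
  have h0 : (∫ y in Set.Ioi d, g y) = 0 :=
    setIntegral_eq_zero_of_forall_eq_zero (fun y hy => hgd y (le_of_lt hy))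
  rw [hset, setIntegral_union hdisj measurableSet_Ioi hg.integrableOn hg.integrableOn,
    h0, add_zero]

private lemma swap_half (u v : ℝ → ℝ) (hu : Continuous u) (hcu : HasCompactSupport u)
    (hv : Continuous v) (hcv : HasCompactSupport v) :
    ∫ x : ℝ, u x * ∫ t in Set.Iio x, v t = ∫ t : ℝ, (∫ x in Set.Ioi t, u x) * v t := by
  have hui : Integrable u := hu.integrable_of_hasCompactSupport hcu
  have hvi : Integrable v := hv.integrable_of_hasCompactSupport hcv
  have hmeas : MeasurableSet {q : ℝ × ℝ | q.2 < q.1} :=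
    (isOpen_lt continuous_snd continuous_fst).measurableSet
  set k : ℝ × ℝ → ℝ := ({q : ℝ × ℝ | q.2 < q.1}).indicator (fun q => u q.1 * v q.2) with hk
  have hki : Integrable k ((volume : Measure ℝ).prod volume) :=
    (hui.mul_prod hvi).indicator hmeas
  have hswap : (∫ x : ℝ, ∫ t : ℝ, k (x, t)) = ∫ t : ℝ, ∫ x : ℝ, k (x, t) :=
    integral_integral_swap (f := fun x t => k (x, t)) hki
  have hL : ∀ x : ℝ, (∫ t : ℝ, k (x, t)) = u x * ∫ t in Set.Iio x, v t := by
    intro x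
    have hfun : (fun t => k (x, t)) = (Set.Iio x).indicator (fun t => u x * v t) := by
      funext t
      by_cases h : t < x <;> simp [hk, Set.indicator, h]
    rw [hfun, integral_indicator measurableSet_Iio, integral_const_mul]
  have hR : ∀ t : ℝ, (∫ x : ℝ, k (x, t)) = (∫ x in Set.Ioi t, u x) * v t := by
    intro t
    have hfun : (fun x => k (x, t)) = (Set.Ioi t).indicator (fun x => u x * v t) := by
      funext x
      by_cases h : t < x <;> simp [hk, Set.indicator, h]
    rw [hfun, integral_indicator measurableSet_Ioi, integral_mul_const]
  simp_rw [hL, hR] at hswap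
  exact hswap

/-- For smooth compactly supported `f` with `∫ f = 0`, the quantity
`⟨f,f⟩ = −∬ |x−y| f(x) f(y) dx dy` is nonnegative, and vanishes iff `f ≡ 0`;
hence `(f,g) ↦ −∬ |x−y| f(x) g(y)` is an inner product on this space. -/
theorem stmt_15 (f : ℝ → ℝ) (hsmooth : ContDiff ℝ (⊤ : ℕ∞) f) (hsupp : HasCompactSupport f)
    (hmean : (∫ x : ℝ, f x) = 0) :
    0 ≤ -(∫ x : ℝ, ∫ y : ℝ, |x - y| * f x * f y) ∧
      (-(∫ x : ℝ, ∫ y : ℝ, |x - y| * f x * f y) = 0 ↔ ∀ x : ℝ, f x = 0) := by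
  have hc : Continuous f := hsmooth.continuous
  have hfi : Integrable f := hc.integrable_of_hasCompactSupport hsupp
  obtain ⟨R, hRpos, hRf⟩ := hsupp.exists_pos_le_norm
  have hfa : ∀ y ≤ -R, f y = 0 := fun y hy =>
    hRf y (by rw [Real.norm_eq_abs]; exact le_abs.2 (Or.inr (by linarith)))
  have hfb : ∀ y, R ≤ y → f y = 0 := fun y hy =>
    hRf y (by rw [Real.norm_eq_abs]; exact le_abs.2 (Or.inl hy))
  set F : ℝ → ℝ := fun t => ∫ y in (-R)..t, f y with hF
  have hFderiv : ∀ x, HasDerivAt F (f x) x := fun x =>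
    intervalIntegral.integral_hasDerivAt_right hfi.intervalIntegrable
      (hc.stronglyMeasurableAtFilter _ _) hc.continuousAt
  have hFcont : Continuous F := continuous_iff_continuousAt.2 fun x => (hFderiv x).continuousAt
  have hFa : ∀ t ≤ -R, F t = 0 := by
    intro t ht
    have h0 : ∫ y in t..(-R), f y = 0 := by
      rw [intervalIntegral.integral_of_le ht]
      exact setIntegral_eq_zero_of_forall_eq_zero fun y hy => hfa y hy.2
    rw [hF]
    simp only
    rw [intervalIntegral.integral_symm, h0, neg_zero]
  have hFIio : ∀ t, ∫ x in Set.Iio t, f x = F t := by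
    intro t
    rcases le_or_gt t (-R) with h | h
    · have h0 : (∫ x in Set.Iio t, f x) = 0 :=
        setIntegral_eq_zero_of_forall_eq_zero fun y hy => hfa y (le_of_lt (lt_of_lt_of_le hy h))
      rw [h0, hFa t h]
    · exact Iio_eq_intervalIntegral hfi (le_of_lt h) hfa
  have hFIoi : ∀ t, ∫ x in Set.Ioi t, f x = -F t := by
    intro t
    have h1 := intervalIntegral.integral_Iio_add_Ici (b := t) hfi.integrableOn hfi.integrableOn
    rw [hmean, integral_Ici_eq_integral_Ioi, hFIio t] at h1
    linarith
  have hFb : ∀ t, R ≤ t → F t = 0 := by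
    intro t ht
    have h1 := hFIoi t
    have h0 : (∫ x in Set.Ioi t, f x) = 0 := setIntegral_eq_zero_of_forall_eq_zero
      (fun y hy => hfb y (le_of_lt (lt_of_le_of_lt ht hy)))
    rw [h0] at h1
    linarith
  have hFsupp : HasCompactSupport F := by
    apply HasCompactSupport.intro (isCompact_Icc (a := -R) (b := R))
    intro x hx
    by_cases h1 : x < -R
    · exact hFa x (le_of_lt h1)
    · have h2 : R < x := by
        simp only [Set.mem_Icc, not_and, not_le] at hx
        exact hx (not_lt.1 h1)
      exact hFb x (le_of_lt h2)
  have hFi : Integrable F := hFcont.integrable_of_hasCompactSupport hFsupp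
  have hgi : ∀ x : ℝ, Integrable (fun y => |x - y| * f y) := fun x =>
    ((continuous_const.sub continuous_id).abs.mul hc).integrable_of_hasCompactSupport
      hsupp.mul_left
  -- Claim A
  have claimA : ∀ x : ℝ, ∫ y in Set.Iio x, (x - y) * f y = ∫ t in Set.Iio x, F t := by
    intro x
    set c := min (-R) x with hc'
    have hca : c ≤ -R := min_le_left _ _
    have hcx : c ≤ x := min_le_right _ _
    have hgint : Integrable (fun y => (x - y) * f y) :=
      ((continuous_const.sub continuous_id).mul hc).integrable_of_hasCompactSupport
        hsupp.mul_left
    rw [Iio_eq_intervalIntegral hgint hcx (fun y hy => by rw [hfa y (hy.trans hca), mul_zero]),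
        Iio_eq_intervalIntegral hFi hcx (fun y hy => hFa y (hy.trans hca))]
    have ibp := intervalIntegral.integral_mul_deriv_eq_deriv_mul
      (a := c) (b := x) (u := fun y => x - y) (v := F) (u' := fun _ => (-1 : ℝ)) (v' := f)
      (fun y _ => by simpa using (hasDerivAt_id y).const_sub x)
      (fun y _ => hFderiv y)
      intervalIntegrable_const hfi.intervalIntegrable
    rw [ibp, hFa c hca]
    simp [neg_one_mul, intervalIntegral.integral_neg]
  -- Claim B
  have claimB : ∀ x : ℝ, ∫ y in Set.Ioi x, (y - x) * f y = -∫ t in Set.Ioi x, F t := by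
    intro x
    set d := max R x with hd'
    have hRd : R ≤ d := le_max_left _ _
    have hxd : x ≤ d := le_max_right _ _
    have hgint : Integrable (fun y => (y - x) * f y) :=
      ((continuous_id.sub continuous_const).mul hc).integrable_of_hasCompactSupport
        hsupp.mul_left
    rw [Ioi_eq_intervalIntegral hgint hxd (fun y hy => by rw [hfb y (hRd.trans hy), mul_zero]),
        Ioi_eq_intervalIntegral hFi hxd (fun y hy => hFb y (hRd.trans hy))]
    have ibp := intervalIntegral.integral_mul_deriv_eq_deriv_mul
      (a := x) (b := d) (u := fun y => y - x) (v := F) (u' := fun _ => (1 : ℝ)) (v' := f)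
      (fun y _ => by simpa using (hasDerivAt_id y).sub_const x)
      (fun y _ => hFderiv y)
      intervalIntegrable_const hfi.intervalIntegrable
    rw [ibp, hFb d hRd]
    simp
  -- value of the one-variable potential
  have hS : ∀ x : ℝ, (∫ y : ℝ, |x - y| * f y)
      = (∫ t in Set.Iio x, F t) - ∫ t in Set.Ioi x, F t := by
    intro x
    rw [← intervalIntegral.integral_Iio_add_Ici (hgi x).integrableOn (hgi x).integrableOn]
    have h1 : ∫ y in Set.Iio x, |x - y| * f y = ∫ y in Set.Iio x, (x - y) * f y :=
      setIntegral_congr_fun measurableSet_Iio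
        (fun y hy => by rw [abs_of_pos (sub_pos.2 hy)])
    have h2 : ∫ y in Set.Ici x, |x - y| * f y = ∫ y in Set.Ici x, (y - x) * f y :=
      setIntegral_congr_fun measurableSet_Ici
        (fun y hy => by rw [abs_sub_comm, abs_of_nonneg (sub_nonneg.2 hy)])
    rw [h1, h2, claimA x, integral_Ici_eq_integral_Ioi, claimB x]
    ring
  -- inner integral
  set Φ : ℝ → ℝ := fun x => ∫ t in Set.Iio x, F t with hΦ
  have hinner : ∀ x : ℝ, (∫ y : ℝ, |x - y| * f x * f y)
      = f x * (Φ x - ∫ t in Set.Ioi x, F t) := by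
    intro x
    have h1 : (∫ y : ℝ, |x - y| * f x * f y) = ∫ y : ℝ, f x * (|x - y| * f y) := by
      congr 1; funext y; ring
    rw [h1, integral_const_mul, hS x]
  -- Φ is continuous
  have hΦeq : ∀ x, Φ x = ∫ t in (-R)..x, F t := by
    intro x
    rcases le_or_gt (-R) x with h | h
    · exact Iio_eq_intervalIntegral hFi h hFa
    · have h0 : Φ x = 0 := setIntegral_eq_zero_of_forall_eq_zero
        fun t ht => hFa t (le_of_lt (lt_trans ht h))
      have h0' : ∫ t in x..(-R), F t = 0 := by
        rw [intervalIntegral.integral_of_le (le_of_lt h)]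
        exact setIntegral_eq_zero_of_forall_eq_zero fun t ht => hFa t ht.2
      rw [h0, intervalIntegral.integral_symm, h0', neg_zero]
  have hΦcont : Continuous Φ := by
    have : Φ = fun x => ∫ t in (-R)..x, F t := funext hΦeq
    rw [this]
    exact hFi.continuous_primitive (-R)
  set C : ℝ := ∫ t : ℝ, F t with hC
  have hΨ : ∀ x, (∫ t in Set.Ioi x, F t) = C - Φ x := by
    intro x
    have h1 := intervalIntegral.integral_Iio_add_Ici (b := x) hFi.integrableOn hFi.integrableOn
    rw [integral_Ici_eq_integral_Ioi] at h1
    rw [hC, ← h1, hΦ]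
    ring
  have hfΦ : Integrable (fun x => f x * Φ x) :=
    (hc.mul hΦcont).integrable_of_hasCompactSupport hsupp.mul_right
  -- compute the double integral
  set I : ℝ := ∫ t : ℝ, F t * F t with hI
  have hTval : (∫ x : ℝ, ∫ y : ℝ, |x - y| * f x * f y) = -2 * I := by
    have step1 : (∫ x : ℝ, ∫ y : ℝ, |x - y| * f x * f y)
        = ∫ x : ℝ, (2 * (f x * Φ x) - C * f x) := by
      congr 1; funext x
      rw [hinner x, hΨ x]
      ring
    have step2 : (∫ x : ℝ, (2 * (f x * Φ x) - C * f x))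
        = 2 * (∫ x : ℝ, f x * Φ x) - C * ∫ x : ℝ, f x := by
      rw [integral_sub (hfΦ.const_mul 2) (hfi.const_mul C), integral_const_mul,
        integral_const_mul]
    have step3 : (∫ x : ℝ, f x * Φ x) = -I := by
      have hsw := swap_half f F hc hsupp hFcont hFsupp
      rw [hΦ]
      simp only
      rw [hsw]
      simp_rw [hFIoi]
      rw [hI, ← integral_neg]
      congr 1; funext t; ring
    rw [step1, step2, step3, hmean]
    ring
  have hInonneg : 0 ≤ I := integral_nonneg fun t => mul_self_nonneg _
  constructor
  · rw [hTval]; linarith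
  · constructor
    · intro h
      have hI0 : I = 0 := by rw [hTval] at h; linarith
      have hFFi : Integrable (fun t => F t * F t) :=
        (hFcont.mul hFcont).integrable_of_hasCompactSupport hFsupp.mul_right
      have hF2 : (fun t => F t * F t) =ᵐ[(volume : Measure ℝ)] 0 :=
        (integral_eq_zero_iff_of_nonneg (fun t => mul_self_nonneg _) hFFi).1 hI0
      have hFzero : ∀ t, F t = 0 := by
        have heq := (Continuous.ae_eq_iff_eq (volume : Measure ℝ)
          (hFcont.mul hFcont) continuous_zero).1 hF2
        intro t
        have := congrFun heq t
        exact mul_self_eq_zero.1 this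
      intro x
      have h1 : HasDerivAt F (f x) x := hFderiv x
      have h2 : F = fun _ => (0 : ℝ) := funext hFzero
      rw [h2] at h1
      exact h1.unique (hasDerivAt_const x 0)
    · intro h
      have hz : (∫ x : ℝ, ∫ y : ℝ, |x - y| * f x * f y) = 0 := by
        simp [h]
      rw [hz, neg_zero]
end

section
/- Let n ≥ 1 and let G : ℝⁿ → [0,∞) be measurable with G(X) → ∞ as ‖X‖ → ∞ (i.e. for every N there is r such that G(X) ≥ N whenever ‖X‖ > r). For measurable u : ℝ → ℝ define I_G[u] = ∫_{ℝⁿ} G(x₁,…,xₙ) ∏_{i=1}^n u(x_i)² dx₁⋯dxₙ. Then for every ε > 0 there exists R > 0 such that every measurable u : ℝ → ℝ with ∫_ℝ u(x)² dx ≤ 1 and I_G[u] ≤ 1 satisfies ∫_{|x|>R} u(x)² dx ≤ ε; i.e., the family { u : ‖u‖_{L²} ≤ 1, I_G[u] ≤ 1 } is uniformly tight. -/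
/-!
Let `S = {x : R < |x|}` and `T = ∫_S u²`. If every coordinate of `X` lies in `S`, then
`‖X‖ > R`, so `G X ≥ N` once `R` is large. Restricting `I_G[u]` to `Sⁿ` and applying Tonelli
gives `N Tⁿ ≤ I_G[u] ≤ 1`, and the choice `N = ε⁻ⁿ` yields `T ≤ ε`.
-/

open MeasureTheory ENNReal

theorem lintegral_fin_nat_prod_eq_prod {α : Type*} [MeasurableSpace α] {n : ℕ}
    {μ : Fin n → Measure α} [∀ i, SigmaFinite (μ i)]
    {f : Fin n → α → ℝ≥0∞} (hf : ∀ i, Measurable (f i)) :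
    ∫⁻ x : Fin n → α, ∏ i, f i (x i) ∂(Measure.pi μ) = ∏ i, ∫⁻ x, f i x ∂(μ i) := by
  induction n with
  | zero => simp
  | succ n ih =>
    let e := MeasurableEquiv.piFinSuccAbove (fun _ : Fin (n + 1) ↦ α) 0
    calc
      _ = ∫⁻ x, f 0 (e x).1 * ∏ i : Fin n, f i.succ ((e x).2 i) ∂(Measure.pi μ) := by
        simp_rw [Fin.prod_univ_succ]; rfl
      _ = ∫⁻ p : α × (Fin n → α), f 0 p.1 * ∏ i : Fin n, f i.succ (p.2 i)
            ∂((μ 0).prod (Measure.pi fun i ↦ μ i.succ)) :=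
        (measurePreserving_piFinSuccAbove μ 0).lintegral_comp_emb e.measurableEmbedding
          fun p ↦ f 0 p.1 * ∏ i : Fin n, f i.succ (p.2 i)
      _ = (∫⁻ x, f 0 x ∂μ 0) * ∏ i : Fin n, ∫⁻ x, f i.succ x ∂(μ i.succ) := by
        rw [← ih fun i ↦ hf i.succ]
        exact lintegral_prod_mul (hf 0).aemeasurable <| Measurable.aemeasurable <|
          Finset.measurable_prod _ fun (i : Fin n) _ ↦ (hf i.succ).comp (measurable_pi_apply i)
      _ = ∏ i, ∫⁻ x, f i x ∂(μ i) := (Fin.prod_univ_succ fun i ↦ ∫⁻ x, f i x ∂(μ i)).symm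

theorem lt_norm_of_lt_abs_apply {ι : Type*} [Fintype ι] {r : ℝ} {X : ι → ℝ} (i : ι)
    (h : r < |X i|) : r < ‖X‖ :=
  h.trans_le (norm_le_pi_norm X i)

theorem ofReal_mul_prod_indicator_le {ι : Type*} [Fintype ι] {G : (ι → ℝ) → ℝ} {N : ℝ}
    (hN : 0 ≤ N) {S : Set ℝ} (hG : ∀ X, (∀ i, X i ∈ S) → N ≤ G X) {g : ℝ → ℝ} (hg : ∀ x, 0 ≤ g x)
    (X : ι → ℝ) :
    ENNReal.ofReal N * ∏ i, S.indicator (fun x ↦ ENNReal.ofReal (g x)) (X i) ≤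
      ENNReal.ofReal (G X * ∏ i, g (X i)) := by
  by_cases hX : ∀ i, X i ∈ S
  · simp only [Set.indicator_of_mem (hX _), ← ENNReal.ofReal_prod_of_nonneg (fun i _ ↦ hg (X i)),
      ← ENNReal.ofReal_mul hN]
    exact ENNReal.ofReal_le_ofReal
      (mul_le_mul_of_nonneg_right (hG X hX) (Finset.prod_nonneg fun i _ ↦ hg (X i)))
  · obtain ⟨i, hi⟩ := not_forall.mp hX
    rw [Finset.prod_eq_zero (Finset.mem_univ i) (Set.indicator_of_notMem hi _), mul_zero]
    exact zero_le

theorem stmt_19_general (n : ℕ) (hn : 1 ≤ n) (G : (Fin n → ℝ) → ℝ)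
    (hGcoer : ∀ N : ℝ, ∃ r : ℝ, ∀ X : Fin n → ℝ, r < ‖X‖ → N ≤ G X) :
    ∀ ε : ℝ, 0 < ε → ∃ R : ℝ, 0 < R ∧
      ∀ u : ℝ → ℝ, Measurable u →
        (∫⁻ x : ℝ, ENNReal.ofReal (u x ^ 2)) ≤ 1 →
        (∫⁻ X : Fin n → ℝ, ENNReal.ofReal (G X * ∏ i, u (X i) ^ 2)) ≤ 1 →
        (∫⁻ x in {x : ℝ | R < |x|}, ENNReal.ofReal (u x ^ 2)) ≤ ENNReal.ofReal ε := by
  intro ε hε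
  obtain ⟨r, hr⟩ := hGcoer (ε ^ n)⁻¹
  refine ⟨max r 1, by positivity, fun u hu _ hIG ↦ ?_⟩
  set S := {x : ℝ | max r 1 < |x|}
  have hS : MeasurableSet S := measurableSet_lt measurable_const measurable_abs
  have hGS : ∀ X : Fin n → ℝ, (∀ i, X i ∈ S) → (ε ^ n)⁻¹ ≤ G X := fun X hX ↦
    hr X (lt_norm_of_lt_abs_apply ⟨0, hn⟩ ((le_max_left r 1).trans_lt (hX _)))
  have hpow : (ENNReal.ofReal ε ^ n)⁻¹ * (∫⁻ x in S, ENNReal.ofReal (u x ^ 2)) ^ n ≤ 1 :=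
    calc (ENNReal.ofReal ε ^ n)⁻¹ * (∫⁻ x in S, ENNReal.ofReal (u x ^ 2)) ^ n
        = ∫⁻ X : Fin n → ℝ, ENNReal.ofReal (ε ^ n)⁻¹ *
            ∏ i, S.indicator (fun x ↦ ENNReal.ofReal (u x ^ 2)) (X i) := by
          rw [lintegral_const_mul' _ _ ENNReal.ofReal_ne_top, volume_pi,
            lintegral_fin_nat_prod_eq_prod fun _ ↦ (hu.pow_const 2).ennreal_ofReal.indicator hS,
            ENNReal.ofReal_inv_of_pos (pow_pos hε n), ENNReal.ofReal_pow hε.le]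
          simp [lintegral_indicator hS]
      _ ≤ ∫⁻ X : Fin n → ℝ, ENNReal.ofReal (G X * ∏ i, u (X i) ^ 2) :=
          lintegral_mono fun X ↦ ofReal_mul_prod_indicator_le (by positivity) hGS
            (fun x ↦ sq_nonneg (u x)) X
      _ ≤ 1 := hIG
  have hεn : ENNReal.ofReal ε ^ n ≠ 0 := pow_ne_zero _ (ENNReal.ofReal_pos.mpr hε).ne'
  rwa [ENNReal.inv_mul_le_iff hεn (ENNReal.pow_ne_top ENNReal.ofReal_ne_top), mul_one,
    ENNReal.pow_le_pow_left_iff (by omega)] at hpow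

/-- If `G : ℝⁿ → [0,∞)` is measurable and `G(X) → ∞` as `‖X‖ → ∞`,
then the family `{u : ‖u‖_{L²} ≤ 1, I_G[u] ≤ 1}` with
`I_G[u] = ∫_{ℝⁿ} G(X) ∏ᵢ u(Xᵢ)² dX` is uniformly tight. -/
theorem stmt_19 (n : ℕ) (hn : 1 ≤ n) (G : (Fin n → ℝ) → ℝ)
    (hGmeas : Measurable G) (hGnonneg : ∀ X, 0 ≤ G X)
    (hGcoer : ∀ N : ℝ, ∃ r : ℝ, ∀ X : Fin n → ℝ, r < ‖X‖ → N ≤ G X) :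
    ∀ ε : ℝ, 0 < ε → ∃ R : ℝ, 0 < R ∧
      ∀ u : ℝ → ℝ, Measurable u →
        (∫⁻ x : ℝ, ENNReal.ofReal (u x ^ 2)) ≤ 1 →
        (∫⁻ X : Fin n → ℝ, ENNReal.ofReal (G X * ∏ i, u (X i) ^ 2)) ≤ 1 →
        (∫⁻ x in {x : ℝ | R < |x|}, ENNReal.ofReal (u x ^ 2)) ≤ ENNReal.ofReal ε :=
  stmt_19_general n hn G hGcoer
end
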